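/- arXiv:0811.3518 — 4 statements merged into one kernel-verified Lean document; each statement's English description precedes it below -/
import Mathlib

section
/- Let E be a set, G a Banach space, K a compact Hausdorff topological space, f : E → Y an arbitrary map in a family ℋ, and let R : K × E × G → [0,∞) and S : ℋ × E × G → [0,∞) satisfy: (i) there is x₀ ∈ E with R(φ,x₀,b) = S(f,x₀,b) = 0 for all φ ∈ K and b ∈ G; (ii) for each x ∈ E and b ∈ G the map φ ↦ R(φ,x,b) is continuous on K; (iii) R(φ,x,ηb) ≤ η·R(φ,x,b) and η·S(f,x,b) ≤ S(f,x,ηb) for all φ ∈ K, x ∈ E, b ∈ G and 0 ≤ η ≤ 1. Let 0 < p < ∞. If f is R-S-abstract p-summing, then there exists a regular Borel probability measure μ on K such that S(f,x,b) ≤ π_{RS,p}(f)^{1/p} · (∫_K R(φ,x,b)^p dμ(φ))^{1/p} for all x ∈ E and b ∈ G. -/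
open MeasureTheory TopologicalSpace
open scoped ENNReal NNReal

/-- Sum of unit clamps is bounded by `t`. -/
lemma clamp_sum_le (m : ℕ) : ∀ t : ℝ, 0 ≤ t →
    ∑ i ∈ Finset.range m, min 1 (max 0 (t - i)) ≤ t := by
  induction m with
  | zero => intro t ht; simpa using ht
  | succ n ih =>
    intro t ht
    rw [Finset.sum_range_succ']
    have key : ∑ i ∈ Finset.range n, min 1 (max 0 (t - ↑(i + 1))) =
        ∑ i ∈ Finset.range n, min 1 (max 0 ((t - 1) - ↑i)) := by
      apply Finset.sum_congr rfl
      intro i _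
      have h : t - ↑(i + 1) = (t - 1) - ↑i := by push_cast; ring
      rw [h]
    rcases le_or_gt 1 t with h1 | h1
    · have h2 := ih (t - 1) (by linarith)
      have h3 : min 1 (max 0 (t - ↑(0 : ℕ))) ≤ 1 := min_le_left _ _
      rw [key]
      linarith
    · have hz : ∀ i ∈ Finset.range n, min 1 (max 0 (t - ↑(i + 1))) = 0 := by
        intro i _
        have hle : t - ↑(i + 1) ≤ 0 := by
          have hi : (0 : ℝ) ≤ (i : ℝ) := Nat.cast_nonneg i
          push_cast
          linarith
        rw [max_eq_left hle]
        simp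
      rw [Finset.sum_congr rfl hz]
      simp only [Finset.sum_const_zero, zero_add]
      rw [Nat.cast_zero, sub_zero, max_eq_right ht]
      exact min_le_right _ _

/-- A mini Riesz–Markov–Kakutani theorem: a positive normalized linear functional on `C(K, ℝ)`
for `K` compact Hausdorff is dominated by integration against some regular Borel probability
measure. -/
theorem rmk_lite {K : Type*} [TopologicalSpace K] [CompactSpace K] [T2Space K] [Nonempty K]
    [MeasurableSpace K] [BorelSpace K]
    (Λ : C(K, ℝ) →ₗ[ℝ] ℝ) (hpos : ∀ g : C(K, ℝ), (∀ x, 0 ≤ g x) → 0 ≤ Λ g)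
    (hone : Λ 1 = 1) :
    ∃ μ : Measure K, μ.Regular ∧ IsProbabilityMeasure μ ∧
      ∀ g : C(K, ℝ), (∀ x, 0 ≤ g x) → Λ g ≤ ∫ x, g x ∂μ := by
  classical
  have hmono : ∀ g h : C(K, ℝ), (∀ x, g x ≤ h x) → Λ g ≤ Λ h := by
    intro g h hle
    have h0 : ∀ x, 0 ≤ (h - g) x := by
      intro x; simp only [ContinuousMap.sub_apply]; linarith [hle x]
    have := hpos (h - g) h0
    rw [map_sub] at this
    linarith
  -- the test-function sets and the pre-content
  set TS : Set K → Set C(K, ℝ) :=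
    fun s => {g : C(K, ℝ) | (∀ x, 0 ≤ g x) ∧ ∀ x ∈ s, 1 ≤ g x} with hTS
  set ν : Set K → ℝ := fun s => sInf (Λ '' TS s) with hν
  have hTSne : ∀ s : Set K, ((Λ '' TS s)).Nonempty := by
    intro s
    exact ⟨Λ 1, 1, ⟨fun x => by simp, fun x _ => by simp⟩, rfl⟩
  have hbdd : ∀ s : Set K, BddBelow (Λ '' TS s) := by
    intro s
    refine ⟨0, ?_⟩
    rintro y ⟨g, hg, rfl⟩
    exact hpos g hg.1
  have hν_nonneg : ∀ s, 0 ≤ ν s := fun s => le_csInf (hTSne s) (by rintro y ⟨g, hg, rfl⟩; exact hpos g hg.1)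
  have hν_le : ∀ (s : Set K) (g : C(K, ℝ)), g ∈ TS s → ν s ≤ Λ g := by
    intro s g hg
    exact csInf_le (hbdd s) ⟨g, hg, rfl⟩
  have hν_mono : ∀ s t : Set K, s ⊆ t → ν s ≤ ν t := by
    intro s t hst
    apply csInf_le_csInf (hbdd s) (hTSne t)
    apply Set.image_mono
    rintro g ⟨hg0, hg1⟩
    exact ⟨hg0, fun x hx => hg1 x (hst hx)⟩
  -- construct the content
  have hν_subadd : ∀ C₁ C₂ : Compacts K, ν (↑(C₁ ⊔ C₂)) ≤ ν ↑C₁ + ν ↑C₂ := by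
    intro C₁ C₂
    apply le_of_forall_pos_le_add
    intro ε hε
    obtain ⟨y₁, ⟨g₁, hg₁, rfl⟩, hy₁⟩ :=
      exists_lt_of_csInf_lt (hTSne ↑C₁) (lt_add_of_pos_right (ν ↑C₁) (half_pos hε))
    obtain ⟨y₂, ⟨g₂, hg₂, rfl⟩, hy₂⟩ :=
      exists_lt_of_csInf_lt (hTSne ↑C₂) (lt_add_of_pos_right (ν ↑C₂) (half_pos hε))
    have hmem : g₁ + g₂ ∈ TS ↑(C₁ ⊔ C₂) := by
      constructor
      · intro x
        simp only [ContinuousMap.add_apply]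
        exact add_nonneg (hg₁.1 x) (hg₂.1 x)
      · intro x hx
        rw [Compacts.coe_sup] at hx
        simp only [ContinuousMap.add_apply]
        rcases hx with hx | hx
        · linarith [hg₁.2 x hx, hg₂.1 x]
        · linarith [hg₂.2 x hx, hg₁.1 x]
    calc ν ↑(C₁ ⊔ C₂) ≤ Λ (g₁ + g₂) := hν_le _ _ hmem
      _ = Λ g₁ + Λ g₂ := map_add _ _ _
      _ ≤ ν ↑C₁ + ν ↑C₂ + ε := by linarith
  let lamC : Content K :=
    { toFun := fun C => (ν ↑C).toNNReal
      mono' := by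
        intro C₁ C₂ h
        exact Real.toNNReal_le_toNNReal (hν_mono _ _ h)
      sup_le' := by
        intro C₁ C₂
        rw [← Real.toNNReal_add (hν_nonneg _) (hν_nonneg _)]
        exact Real.toNNReal_le_toNNReal (hν_subadd C₁ C₂)
      sup_disjoint' := by
        intro C₁ C₂ hd h₁ h₂
        refine le_antisymm ?_ ?_
        · rw [← Real.toNNReal_add (hν_nonneg _) (hν_nonneg _)]
          exact Real.toNNReal_le_toNNReal (hν_subadd C₁ C₂)
        · rw [← Real.toNNReal_add (hν_nonneg _) (hν_nonneg _)]
          apply Real.toNNReal_le_toNNReal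
          -- Urysohn separation
          obtain ⟨w, hw0, hw1, hw01⟩ := exists_continuous_zero_one_of_isClosed h₂ h₁ hd.symm
          apply le_csInf (hTSne _)
          rintro y ⟨g, ⟨hg0, hg1⟩, rfl⟩
          have hmem₁ : g * w ∈ TS ↑C₁ := by
            constructor
            · intro x
              simp only [ContinuousMap.mul_apply]
              exact mul_nonneg (hg0 x) (hw01 x).1
            · intro x hx
              simp only [ContinuousMap.mul_apply]
              have : w x = 1 := hw1 hx
              rw [this, mul_one]
              exact hg1 x (by rw [Compacts.coe_sup]; exact Or.inl hx)
          have hmem₂ : g * (1 - w) ∈ TS ↑C₂ := by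
            constructor
            · intro x
              simp only [ContinuousMap.mul_apply, ContinuousMap.sub_apply,
                ContinuousMap.one_apply]
              exact mul_nonneg (hg0 x) (by linarith [(hw01 x).2])
            · intro x hx
              simp only [ContinuousMap.mul_apply, ContinuousMap.sub_apply,
                ContinuousMap.one_apply]
              have : w x = 0 := hw0 hx
              rw [this, sub_zero, mul_one]
              exact hg1 x (by rw [Compacts.coe_sup]; exact Or.inr hx)
          have hsplit : g * w + g * (1 - w) = g := by ext x; simp; ring
          calc ν ↑C₁ + ν ↑C₂ ≤ Λ (g * w) + Λ (g * (1 - w)) :=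
                add_le_add (hν_le _ _ hmem₁) (hν_le _ _ hmem₂)
            _ = Λ (g * w + g * (1 - w)) := (map_add _ _ _).symm
            _ = Λ g := by rw [hsplit] }
  set μ : Measure K := lamC.measure with hμ
  have hregular : μ.Regular := lamC.regular
  -- the content of the full space is 1
  have hν_univ : ν Set.univ = 1 := by
    apply le_antisymm
    · have : (1 : C(K, ℝ)) ∈ TS Set.univ := ⟨fun x => by simp, fun x _ => by simp⟩
      calc ν Set.univ ≤ Λ 1 := hν_le _ _ this
        _ = 1 := hone
    · apply le_csInf (hTSne _)
      rintro y ⟨g, ⟨hg0, hg1⟩, rfl⟩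
      have := hmono 1 g (fun x => by simpa using hg1 x trivial)
      rwa [hone] at this
  have htop : lamC.toFun ⊤ = 1 := by
    show (ν ↑(⊤ : Compacts K)).toNNReal = 1
    rw [Compacts.coe_top, hν_univ]
    simp
  have hμuniv : μ Set.univ = 1 := by
    rw [hμ, Content.measure_apply _ MeasurableSet.univ,
      lamC.outerMeasure_of_isOpen Set.univ isOpen_univ]
    apply le_antisymm
    · rw [Content.innerContent]
      apply iSup₂_le
      intro C _
      have h1 := lamC.mono C ⊤ (by simp)
      have h2 : ((lamC.toFun ⊤ : ℝ≥0) : ℝ≥0∞) = 1 := by rw [htop]; simp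
      exact h1.trans h2.le
    · have h1 := lamC.le_innerContent ⊤ ⟨Set.univ, isOpen_univ⟩ (by simp)
      have h2 : ((lamC.toFun ⊤ : ℝ≥0) : ℝ≥0∞) = 1 := by rw [htop]; simp
      rw [show (lamC ⊤ : ℝ≥0∞) = 1 from h2] at h1
      exact h1
  have hprob : IsProbabilityMeasure μ := ⟨hμuniv⟩
  haveI := hprob
  -- integrability of continuous functions
  have hintegrable : ∀ g : C(K, ℝ), Integrable (fun x => g x) μ := by
    intro g
    exact g.continuous.integrable_of_hasCompactSupport (HasCompactSupport.of_compactSpace _)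
  -- the main estimate: ∫ g ≤ Λ g for g ≥ 0
  have hint_le : ∀ g : C(K, ℝ), (∀ x, 0 ≤ g x) → ∫ x, g x ∂μ ≤ Λ g := by
    intro g hg0
    apply le_of_forall_pos_le_add
    intro ε hε
    obtain ⟨n, hn⟩ := exists_nat_one_div_lt hε
    have hn0 : (0:ℝ) < n + 1 := by positivity
    set N : ℝ := (n : ℝ) + 1 with hN
    -- superlevel sets
    set U : ℕ → Set K := fun i => {x | (i : ℝ) < N * g x} with hU
    have hUopen : ∀ i, IsOpen (U i) :=
      fun i => isOpen_lt continuous_const (continuous_const.mul g.continuous)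
    -- test functions
    set h : ℕ → C(K, ℝ) := fun i =>
      ⟨fun x => min 1 (max 0 (N * g x + 1 - i)), by
        apply continuous_const.min
        apply continuous_const.max
        exact ((continuous_const.mul g.continuous).add continuous_const).sub continuous_const⟩
      with hh
    have hh0 : ∀ i x, 0 ≤ h i x := fun i x => le_min zero_le_one (le_max_left _ _)
    -- number of levels
    set n' : ℕ := (⌈N * ‖g‖⌉₊ + 1) with hn'
    -- step a: μ (U i) ≤ Λ (h i)
    have hstepa : ∀ i, μ (U i) ≤ ((Λ (h i)).toNNReal : ℝ≥0∞) := by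
      intro i
      rw [hμ, Content.measure_apply _ (hUopen i).measurableSet,
        lamC.outerMeasure_of_isOpen _ (hUopen i), Content.innerContent]
      apply iSup₂_le
      intro C hC
      have hmem : h i ∈ TS ↑C := by
        constructor
        · exact hh0 i
        · intro x hx
          have hxU : (i : ℝ) < N * g x := hC hx
          show (1:ℝ) ≤ min 1 (max 0 (N * g x + 1 - i))
          refine le_min le_rfl (le_max_of_le_right (by linarith))
      exact ENNReal.coe_le_coe.2 (Real.toNNReal_le_toNNReal (hν_le _ _ hmem))
    have hΛh_nonneg : ∀ i, 0 ≤ Λ (h i) := fun i => hpos (h i) (hh0 i)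
    have hstepa' : ∀ i, (μ (U i)).toReal ≤ Λ (h i) := by
      intro i
      have := ENNReal.toReal_mono (by simp) (hstepa i)
      rwa [ENNReal.coe_toReal, Real.coe_toNNReal _ (hΛh_nonneg i)] at this
    -- step b: pointwise bound  N * g x ≤ ∑ indicator
    have hstepb : ∀ x, N * g x ≤
        ∑ i ∈ Finset.range n', (U i).indicator (fun _ => (1:ℝ)) x := by
      intro x
      set t : ℝ := N * g x with ht
      have ht0 : 0 ≤ t := mul_nonneg hn0.le (hg0 x)
      have htle : t ≤ n' := by
        have h1 : g x ≤ ‖g‖ := by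
          calc g x ≤ |g x| := le_abs_self _
            _ = ‖g x‖ := (Real.norm_eq_abs _).symm
            _ ≤ ‖g‖ := g.norm_coe_le_norm x
        have h2 : t ≤ N * ‖g‖ := by
          apply mul_le_mul_of_nonneg_left h1 hn0.le
        have h3 : N * ‖g‖ ≤ (⌈N * ‖g‖⌉₊ : ℝ) := Nat.le_ceil _
        have h4 : ((⌈N * ‖g‖⌉₊ : ℕ) : ℝ) ≤ ((⌈N * ‖g‖⌉₊ + 1 : ℕ) : ℝ) := by
          push_cast; linarith
        calc t ≤ (⌈N * ‖g‖⌉₊ : ℝ) := le_trans h2 h3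
          _ ≤ (n' : ℝ) := by rw [hn']; push_cast; linarith
      have hceil : (⌈t⌉₊ : ℕ) ≤ n' := Nat.ceil_le.2 htle
      have hsub : Finset.range ⌈t⌉₊ ⊆ Finset.range n' := Finset.range_subset_range.2 hceil
      have hindic : ∀ i : ℕ, (U i).indicator (fun _ => (1:ℝ)) x
          = if (i:ℝ) < t then 1 else 0 := by
        intro i
        rw [Set.indicator_apply]
        congr 1
      calc t ≤ (⌈t⌉₊ : ℝ) := Nat.le_ceil _
        _ = ∑ i ∈ Finset.range ⌈t⌉₊, (U i).indicator (fun _ => (1:ℝ)) x := by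
            rw [Finset.sum_congr rfl (fun i hi => by
              rw [hindic i, if_pos (Nat.lt_ceil.1 (Finset.mem_range.1 hi))])]
            simp
        _ ≤ ∑ i ∈ Finset.range n', (U i).indicator (fun _ => (1:ℝ)) x := by
            apply Finset.sum_le_sum_of_subset_of_nonneg hsub
            intro i _ _
            exact Set.indicator_nonneg (fun _ _ => zero_le_one) x
    -- step c: integrate
    have hind_integrable : ∀ i, Integrable ((U i).indicator (fun _ => (1:ℝ))) μ :=
      fun i => (integrable_const (1:ℝ)).indicator (hUopen i).measurableSet
    have hstepc : N * ∫ x, g x ∂μ ≤ ∑ i ∈ Finset.range n', (μ (U i)).toReal := by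
      have h1 : ∫ x, N * g x ∂μ ≤
          ∫ x, (∑ i ∈ Finset.range n', (U i).indicator (fun _ => (1:ℝ)) x) ∂μ := by
        apply integral_mono ((hintegrable g).const_mul N)
          (integrable_finset_sum _ (fun i _ => hind_integrable i)) hstepb
      rw [integral_const_mul] at h1
      rw [integral_finset_sum _ (fun i _ => hind_integrable i)] at h1
      have h2 : ∀ i ∈ Finset.range n',
          ∫ x, (U i).indicator (fun _ => (1:ℝ)) x ∂μ = (μ (U i)).toReal := by
        intro i _
        rw [integral_indicator_const (1:ℝ) (hUopen i).measurableSet]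
        simp [Measure.real]
      rwa [Finset.sum_congr rfl h2] at h1
    -- step d: sum of Λ (h i)
    have hstepd : ∑ i ∈ Finset.range n', Λ (h i) ≤ N * Λ g + 1 := by
      have hsum_eq : ∑ i ∈ Finset.range n', Λ (h i) = Λ (∑ i ∈ Finset.range n', h i) :=
        (map_sum Λ h (Finset.range n')).symm
      rw [hsum_eq]
      have hle : ∀ x, (∑ i ∈ Finset.range n', h i) x ≤ (N • g + 1) x := by
        intro x
        rw [ContinuousMap.sum_apply]
        have := clamp_sum_le n' (N * g x + 1) (by nlinarith [hg0 x])
        simp only [ContinuousMap.add_apply, ContinuousMap.smul_apply, ContinuousMap.one_apply,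
          smul_eq_mul]
        calc ∑ i ∈ Finset.range n', h i x
            = ∑ i ∈ Finset.range n', min 1 (max 0 ((N * g x + 1) - i)) := by
              apply Finset.sum_congr rfl
              intro i _
              rfl
          _ ≤ N * g x + 1 := this
      calc Λ (∑ i ∈ Finset.range n', h i) ≤ Λ (N • g + 1) := hmono _ _ hle
        _ = N * Λ g + 1 := by rw [map_add, _root_.map_smul, hone, smul_eq_mul]
    -- combine
    have hcombine : N * ∫ x, g x ∂μ ≤ N * Λ g + 1 := by
      calc N * ∫ x, g x ∂μ ≤ ∑ i ∈ Finset.range n', (μ (U i)).toReal := hstepc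
        _ ≤ ∑ i ∈ Finset.range n', Λ (h i) := Finset.sum_le_sum (fun i _ => hstepa' i)
        _ ≤ N * Λ g + 1 := hstepd
    have hfin : ∫ x, g x ∂μ ≤ Λ g + 1 / N := by
      rw [div_eq_inv_mul, ← mul_le_mul_iff_right₀ hn0]
      calc N * ∫ x, g x ∂μ ≤ N * Λ g + 1 := hcombine
        _ = N * (Λ g + N⁻¹ * 1) := by field_simp
    linarith [hn]
  -- flip the inequality using that μ is a probability measure
  refine ⟨μ, hregular, hprob, ?_⟩
  intro g hg0
  set M : ℝ := ‖g‖ with hM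
  have hgle : ∀ x, g x ≤ M := by
    intro x
    calc g x ≤ |g x| := le_abs_self _
      _ = ‖g x‖ := (Real.norm_eq_abs _).symm
      _ ≤ ‖g‖ := g.norm_coe_le_norm x
  set hcm : C(K, ℝ) := M • 1 - g with hhcm
  have hcm0 : ∀ x, 0 ≤ hcm x := by
    intro x
    simp only [hhcm, ContinuousMap.sub_apply, ContinuousMap.smul_apply, ContinuousMap.one_apply,
      smul_eq_mul, mul_one]
    linarith [hgle x]
  have := hint_le hcm hcm0
  have hL : Λ hcm = M - Λ g := by
    rw [hhcm, map_sub, _root_.map_smul, hone, smul_eq_mul, mul_one]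
  have hI : ∫ x, hcm x ∂μ = M - ∫ x, g x ∂μ := by
    have h1 : ∫ x, hcm x ∂μ = ∫ x, (M - g x) ∂μ := by
      apply integral_congr_ae
      filter_upwards with x
      simp [hhcm]
    rw [h1, integral_sub (integrable_const M) (hintegrable g), integral_const]
    simp [hμuniv]
  rw [hL, hI] at this
  linarith

/-- The hard direction of the unified Pietsch domination theorem: if `f` is
`R`-`S`-abstract `p`-summing, then there is a regular Borel probability measure `μ` on `K`
dominating `S` with constant `π_{RS,p}(f) ^ (1/p)`, where `π_{RS,p}(f)` is the infimum of
the admissible summing constants. -/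
theorem unified_pietsch_domination_hard_direction
    {E G K H : Type*}
    [NormedAddCommGroup G] [NormedSpace ℝ G] [CompleteSpace G]
    [TopologicalSpace K] [CompactSpace K] [T2Space K] [Nonempty K]
    [MeasurableSpace K] [BorelSpace K]
    (f : H) (R : K → E → G → ℝ) (S : H → E → G → ℝ)
    (hR_nonneg : ∀ (φ : K) (x : E) (b : G), 0 ≤ R φ x b)
    (hS_nonneg : ∀ (g : H) (x : E) (b : G), 0 ≤ S g x b)
    (hzero : ∃ x₀ : E, ∀ (φ : K) (b : G), R φ x₀ b = 0 ∧ S f x₀ b = 0)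
    (hRcont : ∀ (x : E) (b : G), Continuous fun φ : K => R φ x b)
    (hRS_hom : ∀ (φ : K) (x : E) (b : G) (η : ℝ), 0 ≤ η → η ≤ 1 →
        R φ x (η • b) ≤ η * R φ x b ∧ η * S f x b ≤ S f x (η • b))
    (p : ℝ) (hp : 0 < p)
    (hsumming : ∃ C₁ > 0, ∀ (m : ℕ) (x : Fin m → E) (b : Fin m → G),
        ∑ j, S f (x j) (b j) ^ p ≤ C₁ * ⨆ φ : K, ∑ j, R φ (x j) (b j) ^ p) :
    ∃ μ : Measure K, μ.Regular ∧ IsProbabilityMeasure μ ∧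
      ∀ (x : E) (b : G),
        S f x b ≤
          (sInf {C₁ : ℝ | 0 < C₁ ∧ ∀ (m : ℕ) (x : Fin m → E) (b : Fin m → G),
              ∑ j, S f (x j) (b j) ^ p ≤ C₁ * ⨆ φ : K, ∑ j, R φ (x j) (b j) ^ p}) ^ (1 / p) *
            (∫ φ, R φ x b ^ p ∂μ) ^ (1 / p) := by
  classical
  set SC : Set ℝ := {C₁ : ℝ | 0 < C₁ ∧ ∀ (m : ℕ) (x : Fin m → E) (b : Fin m → G),
      ∑ j, S f (x j) (b j) ^ p ≤ C₁ * ⨆ φ : K, ∑ j, R φ (x j) (b j) ^ p} with hSC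
  set c : ℝ := sInf SC with hc
  have hSCne : SC.Nonempty := by
    obtain ⟨C₁, hC₁, hC₁'⟩ := hsumming
    exact ⟨C₁, hC₁, hC₁'⟩
  have hSCbdd : BddBelow SC := ⟨0, fun y hy => hy.1.le⟩
  have hc0 : 0 ≤ c := le_csInf hSCne (fun y hy => hy.1.le)
  -- continuity of the basic functions
  have hRpcont : ∀ (x : E) (b : G), Continuous fun φ : K => R φ x b ^ p := by
    intro x b
    exact (hRcont x b).rpow_const (fun φ => Or.inr hp.le)
  have hBcont : ∀ (m : ℕ) (x : Fin m → E) (b : Fin m → G),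
      Continuous fun φ : K => ∑ j, R φ (x j) (b j) ^ p := by
    intro m x b
    exact continuous_finset_sum _ (fun j _ => hRpcont (x j) (b j))
  -- the sup is attained
  have hBmax : ∀ (m : ℕ) (x : Fin m → E) (b : Fin m → G),
      ∃ φ₀ : K, ∀ φ : K, (∑ j, R φ (x j) (b j) ^ p) ≤ ∑ j, R φ₀ (x j) (b j) ^ p := by
    intro m x b
    obtain ⟨φ₀, _, hmax⟩ := isCompact_univ.exists_isMaxOn Set.univ_nonempty
      (hBcont m x b).continuousOn
    exact ⟨φ₀, fun φ => hmax (Set.mem_univ φ)⟩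
  have hBbdd : ∀ (m : ℕ) (x : Fin m → E) (b : Fin m → G),
      BddAbove (Set.range fun φ : K => ∑ j, R φ (x j) (b j) ^ p) := by
    intro m x b
    obtain ⟨φ₀, hφ₀⟩ := hBmax m x b
    exact ⟨∑ j, R φ₀ (x j) (b j) ^ p, by rintro y ⟨φ, rfl⟩; exact hφ₀ φ⟩
  have hsup_eq : ∀ (m : ℕ) (x : Fin m → E) (b : Fin m → G), ∀ φ₀ : K,
      (∀ φ : K, (∑ j, R φ (x j) (b j) ^ p) ≤ ∑ j, R φ₀ (x j) (b j) ^ p) →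
      (⨆ φ : K, ∑ j, R φ (x j) (b j) ^ p) = ∑ j, R φ₀ (x j) (b j) ^ p := by
    intro m x b φ₀ hφ₀
    exact le_antisymm (ciSup_le hφ₀) (le_ciSup (hBbdd m x b) φ₀)
  have hsup_nonneg : ∀ (m : ℕ) (x : Fin m → E) (b : Fin m → G),
      0 ≤ ⨆ φ : K, ∑ j, R φ (x j) (b j) ^ p := by
    intro m x b
    obtain ⟨φ₁⟩ := ‹Nonempty K›
    refine le_trans ?_ (le_ciSup (hBbdd m x b) φ₁)
    exact Finset.sum_nonneg (fun j _ => Real.rpow_nonneg (hR_nonneg _ _ _) p)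
  -- the key inequality with constant c
  have hkey : ∀ (m : ℕ) (x : Fin m → E) (b : Fin m → G),
      ∑ j, S f (x j) (b j) ^ p ≤ c * ⨆ φ : K, ∑ j, R φ (x j) (b j) ^ p := by
    intro m x b
    apply le_of_forall_pos_le_add
    intro δ hδ
    set B : ℝ := ⨆ φ : K, ∑ j, R φ (x j) (b j) ^ p with hB
    have hB0 : 0 ≤ B := hsup_nonneg m x b
    have hlt : c < c + δ / (B + 1) := by
      have : 0 < δ / (B + 1) := by positivity
      linarith
    obtain ⟨C₁, hC₁, hC₁lt⟩ := exists_lt_of_csInf_lt hSCne hlt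
    calc ∑ j, S f (x j) (b j) ^ p ≤ C₁ * B := hC₁.2 m x b
      _ ≤ (c + δ / (B + 1)) * B := mul_le_mul_of_nonneg_right hC₁lt.le hB0
      _ = c * B + δ * (B / (B + 1)) := by ring
      _ ≤ c * B + δ := by
          have h1 : B / (B + 1) ≤ 1 := by
            rw [div_le_one (by linarith)]
            linarith
          nlinarith
  -- the functions in the set Q
  set Qfun : ∀ (m : ℕ), (Fin m → E) → (Fin m → G) → C(K, ℝ) :=
    fun m x b => ⟨fun φ => (∑ j, S f (x j) (b j) ^ p) - c * ∑ j, R φ (x j) (b j) ^ p,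
      (continuous_const.sub (continuous_const.mul (hBcont m x b)))⟩ with hQfun
  set Qset : Set C(K, ℝ) := {q | ∃ (m : ℕ) (x : Fin m → E) (b : Fin m → G), q = Qfun m x b}
    with hQset
  -- each q ∈ Qset is nonpositive somewhere
  have hQneg : ∀ q ∈ Qset, ∃ φ₀ : K, q φ₀ ≤ 0 := by
    rintro q ⟨m, x, b, rfl⟩
    obtain ⟨φ₀, hφ₀⟩ := hBmax m x b
    refine ⟨φ₀, ?_⟩
    show (∑ j, S f (x j) (b j) ^ p) - c * ∑ j, R φ₀ (x j) (b j) ^ p ≤ 0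
    have := hkey m x b
    rw [hsup_eq m x b φ₀ hφ₀] at this
    linarith
  -- scaling estimates
  have hscale : ∀ (a : ℝ), 0 ≤ a → a ≤ 1 → ∀ (x : E) (b : G),
      (a * S f x b ^ p ≤ S f x (a ^ (1/p) • b) ^ p) ∧
      (∀ φ : K, R φ x (a ^ (1/p) • b) ^ p ≤ a * R φ x b ^ p) := by
    intro a ha0 ha1 x b
    set η : ℝ := a ^ (1/p) with hη
    have hη0 : 0 ≤ η := Real.rpow_nonneg ha0 _
    have hη1 : η ≤ 1 := Real.rpow_le_one ha0 ha1 (by positivity)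
    have hηp : η ^ p = a := by
      rw [hη, ← Real.rpow_mul ha0, one_div, inv_mul_cancel₀ hp.ne', Real.rpow_one]
    constructor
    · have hhom := (hRS_hom (Classical.arbitrary K) x b η hη0 hη1).2
      have h1 : (η * S f x b) ^ p ≤ S f x (η • b) ^ p :=
        Real.rpow_le_rpow (mul_nonneg hη0 (hS_nonneg f x b)) hhom hp.le
      rwa [Real.mul_rpow hη0 (hS_nonneg f x b), hηp] at h1
    · intro φ
      have hhom := (hRS_hom φ x b η hη0 hη1).1
      have h1 : R φ x (η • b) ^ p ≤ (η * R φ x b) ^ p :=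
        Real.rpow_le_rpow (hR_nonneg φ x (η • b)) hhom hp.le
      rwa [Real.mul_rpow hη0 (hR_nonneg φ x b), hηp] at h1
  -- the set of functions dominated by some element of Qset is convex
  set D : Set C(K, ℝ) := {h | ∃ q ∈ Qset, ∀ φ, h φ ≤ q φ} with hD
  have hQD : Qset ⊆ D := fun q hq => ⟨q, hq, fun φ => le_rfl⟩
  have hDconv : Convex ℝ D := by
    rintro h₁ ⟨q₁, ⟨m, x, b, rfl⟩, hle₁⟩ h₂ ⟨q₂, ⟨m', x', b', rfl⟩, hle₂⟩ a a' ha ha' haa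
    have ha1 : a ≤ 1 := by linarith
    have ha'1 : a' ≤ 1 := by linarith
    set X : Fin (m + m') → E := Fin.addCases x x' with hX
    set B : Fin (m + m') → G :=
      Fin.addCases (fun j => a ^ (1/p) • b j) (fun j => a' ^ (1/p) • b' j) with hBdef
    refine ⟨Qfun (m + m') X B, ⟨m + m', X, B, rfl⟩, ?_⟩
    intro φ
    have hS1 : a * (∑ j, S f (x j) (b j) ^ p) ≤ ∑ j : Fin m, S f (X (Fin.castAdd m' j)) (B (Fin.castAdd m' j)) ^ p := by
      rw [Finset.mul_sum]
      apply Finset.sum_le_sum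
      intro j _
      simp only [hX, hBdef, Fin.addCases_left]
      exact (hscale a ha ha1 (x j) (b j)).1
    have hS2 : a' * (∑ j, S f (x' j) (b' j) ^ p) ≤ ∑ j : Fin m', S f (X (Fin.natAdd m j)) (B (Fin.natAdd m j)) ^ p := by
      rw [Finset.mul_sum]
      apply Finset.sum_le_sum
      intro j _
      simp only [hX, hBdef, Fin.addCases_right]
      exact (hscale a' ha' ha'1 (x' j) (b' j)).1
    have hR1 : ∑ j : Fin m, R φ (X (Fin.castAdd m' j)) (B (Fin.castAdd m' j)) ^ p ≤ a * ∑ j, R φ (x j) (b j) ^ p := by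
      rw [Finset.mul_sum]
      apply Finset.sum_le_sum
      intro j _
      simp only [hX, hBdef, Fin.addCases_left]
      exact (hscale a ha ha1 (x j) (b j)).2 φ
    have hR2 : ∑ j : Fin m', R φ (X (Fin.natAdd m j)) (B (Fin.natAdd m j)) ^ p ≤ a' * ∑ j, R φ (x' j) (b' j) ^ p := by
      rw [Finset.mul_sum]
      apply Finset.sum_le_sum
      intro j _
      simp only [hX, hBdef, Fin.addCases_right]
      exact (hscale a' ha' ha'1 (x' j) (b' j)).2 φ
    have hq : (Qfun (m + m') X B) φ =
        (∑ j : Fin m, S f (X (Fin.castAdd m' j)) (B (Fin.castAdd m' j)) ^ p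
          + ∑ j : Fin m', S f (X (Fin.natAdd m j)) (B (Fin.natAdd m j)) ^ p)
        - c * (∑ j : Fin m, R φ (X (Fin.castAdd m' j)) (B (Fin.castAdd m' j)) ^ p
          + ∑ j : Fin m', R φ (X (Fin.natAdd m j)) (B (Fin.natAdd m j)) ^ p) := by
      show (∑ j, S f (X j) (B j) ^ p) - c * ∑ j, R φ (X j) (B j) ^ p = _
      rw [Fin.sum_univ_add (fun j => S f (X j) (B j) ^ p),
        Fin.sum_univ_add (fun j => R φ (X j) (B j) ^ p)]
    have hcomb : (a • h₁ + a' • h₂) φ = a * h₁ φ + a' * h₂ φ := by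
      simp [ContinuousMap.add_apply, ContinuousMap.smul_apply, smul_eq_mul]
    rw [hcomb, hq]
    have e₁ : h₁ φ ≤ (∑ j, S f (x j) (b j) ^ p) - c * ∑ j, R φ (x j) (b j) ^ p := hle₁ φ
    have e₂ : h₂ φ ≤ (∑ j, S f (x' j) (b' j) ^ p) - c * ∑ j, R φ (x' j) (b' j) ^ p := hle₂ φ
    have e₃ : a * h₁ φ ≤ a * ((∑ j, S f (x j) (b j) ^ p) - c * ∑ j, R φ (x j) (b j) ^ p) :=
      mul_le_mul_of_nonneg_left e₁ ha
    have e₄ : a' * h₂ φ ≤ a' * ((∑ j, S f (x' j) (b' j) ^ p) - c * ∑ j, R φ (x' j) (b' j) ^ p) :=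
      mul_le_mul_of_nonneg_left e₂ ha'
    have e₅ : c * (∑ j : Fin m, R φ (X (Fin.castAdd m' j)) (B (Fin.castAdd m' j)) ^ p
          + ∑ j : Fin m', R φ (X (Fin.natAdd m j)) (B (Fin.natAdd m j)) ^ p)
        ≤ c * (a * (∑ j, R φ (x j) (b j) ^ p) + a' * (∑ j, R φ (x' j) (b' j) ^ p)) :=
      mul_le_mul_of_nonneg_left (add_le_add hR1 hR2) hc0
    nlinarith
  -- the positive cone P
  set P : Set C(K, ℝ) := {h | ∀ φ, 0 < h φ} with hP
  have hPconv : Convex ℝ P := by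
    rintro h₁ hh₁ h₂ hh₂ a a' ha ha' haa
    intro φ
    have hcomb : (a • h₁ + a' • h₂) φ = a * h₁ φ + a' * h₂ φ := by
      simp [ContinuousMap.add_apply, ContinuousMap.smul_apply, smul_eq_mul]
    rw [hcomb]
    rcases eq_or_lt_of_le ha with h | h
    · have ha'1 : a' = 1 := by linarith
      rw [← h, ha'1]
      simpa using hh₂ φ
    · have h1 : 0 < a * h₁ φ := mul_pos h (hh₁ φ)
      have h2 : 0 ≤ a' * h₂ φ := mul_nonneg ha' (hh₂ φ).le
      linarith
  have hPopen : IsOpen P := by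
    rw [Metric.isOpen_iff]
    intro h hh
    obtain ⟨φ₀, _, hmin⟩ := isCompact_univ.exists_isMinOn Set.univ_nonempty
      h.continuous.continuousOn
    refine ⟨h φ₀, hh φ₀, ?_⟩
    intro g hg
    intro φ
    have h1 : dist (g φ) (h φ) ≤ dist g h := ContinuousMap.dist_apply_le_dist φ
    have h2 : |g φ - h φ| < h φ₀ := by
      rw [← Real.dist_eq]
      exact lt_of_le_of_lt h1 hg
    have h3 : h φ₀ ≤ h φ := hmin (Set.mem_univ φ)
    have := abs_lt.1 h2
    linarith [this.1]
  have hdisj : Disjoint P (convexHull ℝ Qset) := by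
    rw [Set.disjoint_left]
    intro h hhP hhQ
    have hhD : h ∈ D := convexHull_min hQD hDconv hhQ
    obtain ⟨q, hq, hle⟩ := hhD
    obtain ⟨φ₀, hφ₀⟩ := hQneg q hq
    have := hhP φ₀
    linarith [hle φ₀]
  obtain ⟨L, u, hLP, hLQ⟩ := geometric_hahn_banach_open hPconv hPopen
    (convex_convexHull ℝ Qset) hdisj
  -- basic facts about L and u
  have h0Q : (0 : C(K, ℝ)) ∈ convexHull ℝ Qset := by
    apply subset_convexHull
    refine ⟨0, Fin.elim0, Fin.elim0, ?_⟩
    ext φ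
    show (0:ℝ) = (∑ j : Fin 0, S f (Fin.elim0 j) (Fin.elim0 j) ^ p)
      - c * ∑ j : Fin 0, R φ (Fin.elim0 j) (Fin.elim0 j) ^ p
    simp
  have hu0 : u ≤ 0 := by
    have := hLQ 0 h0Q
    rwa [map_zero] at this
  have h1P : (1 : C(K, ℝ)) ∈ P := fun φ => by simp
  have hL1 : L 1 < 0 := lt_of_lt_of_le (hLP 1 h1P) hu0
  have hεP : ∀ ε : ℝ, 0 < ε → (ε • (1 : C(K, ℝ))) ∈ P := by
    intro ε hε φ
    simp only [ContinuousMap.smul_apply, ContinuousMap.one_apply, smul_eq_mul, mul_one]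
    exact hε
  have hu_nonneg : 0 ≤ u := by
    by_contra hcon
    push_neg at hcon
    set ε : ℝ := u / (2 * L 1) with hε
    have hε0 : 0 < ε := div_pos_of_neg_of_neg hcon (by linarith)
    have := hLP _ (hεP ε hε0)
    rw [_root_.map_smul, smul_eq_mul] at this
    have hL1ne : L 1 ≠ 0 := ne_of_lt hL1
    have : u / 2 < u := by
      have heq : ε * L 1 = u / 2 := by
        field_simp [hε]
        rw [hε]; field_simp
      linarith [heq ▸ this]
    linarith
  have hLnonpos : ∀ g : C(K, ℝ), (∀ φ, 0 ≤ g φ) → L g ≤ 0 := by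
    intro g hg
    by_contra hcon
    push_neg at hcon
    set A : ℝ := -L 1 with hA
    have hA0 : 0 < A := by simp [hA]; linarith
    have hkey2 : ∀ ε : ℝ, 0 < ε → L g < ε * A := by
      intro ε hε
      have hmem : g + ε • (1 : C(K, ℝ)) ∈ P := by
        intro φ
        simp only [ContinuousMap.add_apply, ContinuousMap.smul_apply,
          ContinuousMap.one_apply, smul_eq_mul, mul_one]
        have := hg φ
        linarith
      have := hLP _ hmem
      rw [map_add, _root_.map_smul, smul_eq_mul] at this
      have : L g + ε * L 1 < u := this
      have h2 : L g < u - ε * L 1 := by linarith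
      have h3 : u - ε * L 1 ≤ ε * A := by
        rw [hA]
        have : u ≤ 0 := hu0
        nlinarith
      linarith
    have hAne : A ≠ 0 := ne_of_gt hA0
    have h5 := hkey2 (L g / (2 * A)) (by positivity)
    have heq : L g / (2 * A) * A = L g / 2 := by
      field_simp
    rw [heq] at h5
    linarith
  have hLQ0 : ∀ q ∈ Qset, 0 ≤ L q := by
    intro q hq
    exact le_trans hu_nonneg (hLQ q (subset_convexHull ℝ Qset hq))
  -- the normalized functional
  set Λ : C(K, ℝ) →ₗ[ℝ] ℝ := (L 1)⁻¹ • (L : C(K, ℝ) →ₗ[ℝ] ℝ) with hΛ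
  have hΛapp : ∀ g : C(K, ℝ), Λ g = (L 1)⁻¹ * L g := by
    intro g
    simp [hΛ, smul_eq_mul]
  have hΛpos : ∀ g : C(K, ℝ), (∀ x, 0 ≤ g x) → 0 ≤ Λ g := by
    intro g hg
    rw [hΛapp]
    have h1 : (L 1)⁻¹ ≤ 0 := by
      apply inv_nonpos.2 hL1.le
    have h2 : L g ≤ 0 := hLnonpos g hg
    nlinarith
  have hΛone : Λ 1 = 1 := by
    rw [hΛapp]
    exact inv_mul_cancel₀ (ne_of_lt hL1)
  have hΛQ : ∀ q ∈ Qset, Λ q ≤ 0 := by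
    intro q hq
    rw [hΛapp]
    have h1 : (L 1)⁻¹ ≤ 0 := inv_nonpos.2 hL1.le
    have h2 : 0 ≤ L q := hLQ0 q hq
    nlinarith
  -- apply the mini Riesz-Markov theorem
  obtain ⟨μ, hreg, hprob, hint⟩ := rmk_lite Λ hΛpos hΛone
  refine ⟨μ, hreg, hprob, ?_⟩
  intro x b
  set Rp : C(K, ℝ) := ⟨fun φ => R φ x b ^ p, hRpcont x b⟩ with hRp
  have hq1 : Qfun 1 (fun _ => x) (fun _ => b) ∈ Qset := ⟨1, _, _, rfl⟩
  have hq1eq : Qfun 1 (fun _ => x) (fun _ => b) = (S f x b ^ p) • (1 : C(K, ℝ)) - c • Rp := by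
    ext φ
    show (∑ _j : Fin 1, S f x b ^ p) - c * ∑ _j : Fin 1, R φ x b ^ p = _
    simp [hRp, ContinuousMap.sub_apply, ContinuousMap.smul_apply, ContinuousMap.one_apply,
      smul_eq_mul]
  have hΛq1 : Λ (Qfun 1 (fun _ => x) (fun _ => b)) = S f x b ^ p - c * Λ Rp := by
    rw [hq1eq, map_sub, _root_.map_smul, _root_.map_smul, hΛone, smul_eq_mul, smul_eq_mul,
      mul_one]
  have hSp_le : S f x b ^ p ≤ c * Λ Rp := by
    have := hΛQ _ hq1
    rw [hΛq1] at this
    linarith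
  have hRp0 : ∀ φ, 0 ≤ Rp φ := fun φ => Real.rpow_nonneg (hR_nonneg φ x b) p
  have hΛRp_le : Λ Rp ≤ ∫ φ, R φ x b ^ p ∂μ := hint Rp hRp0
  set I : ℝ := ∫ φ, R φ x b ^ p ∂μ with hI
  have hI0 : 0 ≤ I := by
    apply integral_nonneg
    intro φ
    exact Real.rpow_nonneg (hR_nonneg φ x b) p
  have hSpI : S f x b ^ p ≤ c * I := by
    calc S f x b ^ p ≤ c * Λ Rp := hSp_le
      _ ≤ c * I := mul_le_mul_of_nonneg_left hΛRp_le hc0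
  calc S f x b = ((S f x b) ^ p) ^ (1/p) := by
        rw [one_div, Real.rpow_rpow_inv (hS_nonneg f x b) (ne_of_gt hp)]
    _ ≤ (c * I) ^ (1/p) := Real.rpow_le_rpow (Real.rpow_nonneg (hS_nonneg f x b) p) hSpI
        (by positivity)
    _ = c ^ (1/p) * I ^ (1/p) := Real.mul_rpow hc0 hI0
end

section
/- Let E be a set, G a Banach space, K a compact Hausdorff topological space, f : E → Y an arbitrary map in a family ℋ, and let R : K × E × G → [0,∞) and S : ℋ × E × G → [0,∞) satisfy: (i) there is x₀ ∈ E with R(φ,x₀,b) = S(f,x₀,b) = 0 for all φ ∈ K and b ∈ G; (ii) for each x ∈ E and b ∈ G the map φ ↦ R(φ,x,b) is continuous on K; (iii) R(φ,x,ηb) ≤ η·R(φ,x,b) and η·S(f,x,b) ≤ S(f,x,ηb) for all φ ∈ K, x ∈ E, b ∈ G and 0 ≤ η ≤ 1. Let 0 < p < ∞. Then f is R-S-abstract p-summing if and only if there exist a constant C > 0 and a regular Borel probability measure μ on K such that S(f,x,b) ≤ C·(∫_K R(φ,x,b)^p dμ(φ))^{1/p} for all x ∈ E and b ∈ G; moreover,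 in that case the infimum of all such constants C equals π_{RS,p}(f)^{1/p}. -/
set_option linter.unusedSectionVars false

open MeasureTheory

noncomputable section

namespace PietschAux

open Set TopologicalSpace NNReal ENNReal BoundedContinuousFunction

variable {X : Type*} [TopologicalSpace X] [CompactSpace X] [T2Space X]

/-- Coercion of a bounded `ℝ≥0`-valued function to a real continuous map. -/
def toRealCM (f : CompactlySupportedContinuousMap X ℝ≥0) : C(X, ℝ) :=
  ⟨fun x => (f x : ℝ), NNReal.continuous_coe.comp f.continuous⟩

@[simp] lemma toRealCM_apply (f : CompactlySupportedContinuousMap X ℝ≥0) (x : X) :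
    toRealCM f x = (f x : ℝ) := rfl

/-- A continuous map on a compact space, as a compactly supported one. -/
def ofCM (f : C(X, ℝ≥0)) : CompactlySupportedContinuousMap X ℝ≥0 :=
  ⟨f, HasCompactSupport.of_compactSpace f⟩

@[simp] lemma ofCM_apply (f : C(X, ℝ≥0)) (x : X) : ofCM f x = f x := rfl


lemma sum_clamp (n : ℕ) (y : ℝ) (h0 : 0 ≤ y) (h1 : y ≤ n) :
    ∑ k ∈ Finset.range n, min 1 (max 0 (y - k)) = y := by
  induction n with
  | zero =>
    simp only [Finset.range_zero, Finset.sum_empty]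
    symm
    exact le_antisymm (by exact_mod_cast h1) h0
  | succ n ih =>
    rw [Finset.sum_range_succ]
    by_cases hy : y ≤ n
    · rw [ih hy]
      have h2 : y - n ≤ 0 := sub_nonpos.2 hy
      rw [max_eq_left h2, min_eq_right zero_le_one, add_zero]
    · push_neg at hy
      have hterm : ∀ k ∈ Finset.range n, min 1 (max 0 (y - k)) = 1 := by
        intro k hk
        have hk' : (k : ℝ) + 1 ≤ n := by exact_mod_cast Finset.mem_range.1 hk
        have h3 : (1 : ℝ) ≤ y - k := by linarith
        rw [max_eq_right (by linarith : (0:ℝ) ≤ y - k), min_eq_left h3]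
      rw [Finset.sum_congr rfl hterm, Finset.sum_const, Finset.card_range, nsmul_eq_mul,
        mul_one]
      have h4 : y ≤ (n : ℝ) + 1 := by push_cast at h1; linarith
      have h5 : (0 : ℝ) ≤ y - n := by linarith
      rw [max_eq_right h5, min_eq_right (by linarith : y - (n:ℝ) ≤ 1)]
      ring

lemma integrable_cm [MeasurableSpace X] [BorelSpace X] {μ : Measure X} [IsFiniteMeasure μ]
    (h : C(X, ℝ)) : Integrable (fun x => h x) μ := by
  refine ⟨h.continuous.aestronglyMeasurable, ?_⟩
  exact HasFiniteIntegral.of_bounded (C := ‖h‖)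
    (Filter.Eventually.of_forall fun x => h.norm_coe_le_norm x)


variable (L : C(X, ℝ) →L[ℝ] ℝ) (hpos : ∀ g : C(X, ℝ), (∀ x, 0 ≤ g x) → 0 ≤ L g)

include hpos

lemma L_mono {g h : C(X, ℝ)} (hgh : ∀ x, g x ≤ h x) : L g ≤ L h := by
  have := hpos (h - g) (fun x => by simpa using sub_nonneg.2 (hgh x))
  rw [map_sub] at this; linarith

/-- The positive functional on nonnegative bounded continuous functions. -/
def Lambda : CompactlySupportedContinuousMap X ℝ≥0 →ₗ[ℝ≥0] ℝ≥0 where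
  toFun f := (L (toRealCM f)).toNNReal
  map_add' f g := by
    show (L (toRealCM (f + g))).toNNReal = (L (toRealCM f)).toNNReal + (L (toRealCM g)).toNNReal
    have h1 : toRealCM (f + g) = toRealCM f + toRealCM g := by
      ext x; simp [toRealCM]
    rw [h1, map_add, Real.toNNReal_add (hpos _ fun x => (f x).coe_nonneg)
      (hpos _ fun x => (g x).coe_nonneg)]
  map_smul' c f := by
    show (L (toRealCM (c • f))).toNNReal = c • (L (toRealCM f)).toNNReal
    have h1 : toRealCM (c • f) = (c : ℝ) • toRealCM f := by
      ext x; simp [toRealCM, NNReal.smul_def]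
    rw [h1, L.map_smul]
    simp only [RingHom.id_apply, smul_eq_mul, NNReal.smul_def]
    rw [Real.toNNReal_mul c.coe_nonneg, Real.toNNReal_coe]

lemma Lambda_apply (f : CompactlySupportedContinuousMap X ℝ≥0) : Lambda L hpos f = (L (toRealCM f)).toNNReal := rfl

lemma Lambda_mono {f g : CompactlySupportedContinuousMap X ℝ≥0} (h : ∀ x, f x ≤ g x) :
    Lambda L hpos f ≤ Lambda L hpos g :=
  Real.toNNReal_mono (L_mono L hpos fun x => by exact_mod_cast h x)

/-- The content associated to the positive functional. -/
def pietschContent : Content X where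
  toFun := rieszContentAux (Lambda L hpos)
  mono' := fun _ _ h => rieszContentAux_mono _ h
  sup_le' := rieszContentAux_sup_le _
  sup_disjoint' := by
    intro K₁ K₂ hd h₁c h₂c
    refine le_antisymm (rieszContentAux_sup_le _ K₁ K₂) ?_
    refine le_csInf (rieszContentAux_image_nonempty _ _) ?_
    rintro b ⟨g, hg, rfl⟩
    obtain ⟨u, hu0, hu1, huI⟩ := exists_continuous_zero_one_of_isClosed h₂c h₁c hd.symm
    set v₁ : CompactlySupportedContinuousMap X ℝ≥0 := ofCM ⟨fun x => g x * Real.toNNReal (u x),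
      (continuous_mul.comp ((map_continuous g).prodMk
        (continuous_real_toNNReal.comp (map_continuous u))))⟩ with hv₁
    set v₂ : CompactlySupportedContinuousMap X ℝ≥0 := ofCM ⟨fun x => g x * Real.toNNReal (1 - u x),
      (continuous_mul.comp ((map_continuous g).prodMk
        (continuous_real_toNNReal.comp (continuous_const.sub (map_continuous u)))))⟩ with hv₂
    have hsum : v₁ + v₂ = g := by
      ext x
      have h0 : 0 ≤ u x := (huI x).1
      have h1 : u x ≤ 1 := (huI x).2
      have hto : Real.toNNReal (u x) + Real.toNNReal (1 - u x) = 1 := by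
        rw [← Real.toNNReal_add h0 (by linarith),
          show u x + (1 - u x) = 1 by ring, Real.toNNReal_one]
      simp only [CompactlySupportedContinuousMap.add_apply, hv₁, hv₂, ofCM_apply,
        ContinuousMap.coe_mk]
      rw [← mul_add, hto, mul_one]
    have hΛ : Lambda L hpos v₁ + Lambda L hpos v₂ = Lambda L hpos g := by
      rw [← map_add, hsum]
    have h₁ : rieszContentAux (Lambda L hpos) K₁ ≤ Lambda L hpos v₁ := by
      refine rieszContentAux_le _ (fun x hx => ?_)
      have : u x = 1 := hu1 hx
      simp only [hv₁, ofCM_apply, ContinuousMap.coe_mk, this, Real.toNNReal_one, mul_one]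
      exact hg x (Or.inl hx)
    have h₂ : rieszContentAux (Lambda L hpos) K₂ ≤ Lambda L hpos v₂ := by
      refine rieszContentAux_le _ (fun x hx => ?_)
      have : u x = 0 := hu0 hx
      simp only [hv₂, ofCM_apply, ContinuousMap.coe_mk, this, sub_zero,
        Real.toNNReal_one, mul_one]
      exact hg x (Or.inr hx)
    calc rieszContentAux (Lambda L hpos) K₁ + rieszContentAux (Lambda L hpos) K₂
        ≤ Lambda L hpos v₁ + Lambda L hpos v₂ := add_le_add h₁ h₂
      _ = Lambda L hpos g := hΛ

section Meas

variable [MeasurableSpace X] [BorelSpace X]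

/-- The Pietsch measure associated to a positive normalized functional. -/
lemma pietschContent_apply (Kc : Compacts X) :
    (pietschContent L hpos) Kc = ((rieszContentAux (Lambda L hpos) Kc : ℝ≥0) : ℝ≥0∞) := rfl

def pietschMeasure : Measure X := (pietschContent L hpos).measure

instance pietschMeasure_regular : (pietschMeasure L hpos).Regular := by
  unfold pietschMeasure; infer_instance

lemma content_univ (hL1 : L 1 = 1) :
    rieszContentAux (Lambda L hpos) ⟨univ, isCompact_univ⟩ = 1 := by
  have h1 : Lambda L hpos (ofCM 1) = 1 := by
    have h : toRealCM (ofCM (1 : C(X, ℝ≥0))) = 1 := by ext x; simp [toRealCM]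
    rw [Lambda_apply, h, hL1, Real.toNNReal_one]
  refine le_antisymm ?_ ?_
  · have := rieszContentAux_le (Lambda L hpos) (K := ⟨univ, isCompact_univ⟩)
      (f := ofCM 1) (fun x _ => le_of_eq (by simp))
    rwa [h1] at this
  · refine le_csInf (rieszContentAux_image_nonempty _ _) ?_
    rintro b ⟨f, hf, rfl⟩
    calc (1 : ℝ≥0) = Lambda L hpos (ofCM 1) := h1.symm
      _ ≤ Lambda L hpos f := Lambda_mono L hpos fun x => by
          simpa using hf x (mem_univ x)

lemma pietschMeasure_univ (hL1 : L 1 = 1) : pietschMeasure L hpos univ = 1 := by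
  rw [pietschMeasure, Content.measure_apply _ MeasurableSet.univ]
  have h := Content.outerMeasure_opens (pietschContent L hpos) ⟨univ, isOpen_univ⟩
  rw [show ((⟨univ, isOpen_univ⟩ : Opens X) : Set X) = univ from rfl] at h
  rw [h]
  refine le_antisymm ?_ ?_
  · refine (Content.innerContent_le _ _ ⟨univ, isCompact_univ⟩ (subset_refl _)).trans ?_
    rw [pietschContent_apply, content_univ L hpos hL1]
    simp
  · refine le_trans ?_ (Content.le_innerContent _ ⟨univ, isCompact_univ⟩ _ (subset_refl _))
    rw [pietschContent_apply, content_univ L hpos hL1]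
    simp

lemma L_le_measure_compact (hL1 : L 1 = 1) (g : C(X, ℝ)) (hg0 : ∀ x, 0 ≤ g x)
    (hg1 : ∀ x, g x ≤ 1) {C : Set X} (hC : IsCompact C) (hsupp : ∀ x, g x ≠ 0 → x ∈ C) :
    L g ≤ (pietschMeasure L hpos C).toReal := by
  set gNN : CompactlySupportedContinuousMap X ℝ≥0 := ofCM ⟨fun x => Real.toNNReal (g x),
    continuous_real_toNNReal.comp g.continuous⟩ with hgNNdef
  have hgNN : toRealCM gNN = g := by
    ext x
    simp only [toRealCM_apply, hgNNdef, ofCM_apply, ContinuousMap.coe_mk]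
    exact Real.coe_toNNReal _ (hg0 x)
  have hLg : Lambda L hpos gNN = Real.toNNReal (L g) := by rw [Lambda_apply, hgNN]
  have h1 : Lambda L hpos gNN ≤ rieszContentAux (Lambda L hpos) ⟨C, hC⟩ := by
    refine le_csInf (rieszContentAux_image_nonempty _ _) ?_
    rintro b ⟨f, hf, rfl⟩
    refine Lambda_mono L hpos fun x => ?_
    by_cases hx : x ∈ C
    · refine le_trans ?_ (hf x hx)
      simp only [hgNNdef, ofCM_apply, ContinuousMap.coe_mk]
      exact Real.toNNReal_le_one.2 (hg1 x)
    · have hgx : g x = 0 := by by_contra h; exact hx (hsupp x h)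
      simp [hgNNdef, hgx]
  have h2 : ((rieszContentAux (Lambda L hpos) ⟨C, hC⟩ : ℝ≥0) : ℝ≥0∞)
      ≤ pietschMeasure L hpos C := by
    rw [pietschMeasure, Content.measure_apply _ (hC.isClosed.measurableSet),
      ← pietschContent_apply L hpos ⟨C, hC⟩]
    exact Content.le_outerMeasure_compacts _ ⟨C, hC⟩
  have hfin : pietschMeasure L hpos C ≠ ⊤ := by
    refine ne_top_of_le_ne_top ?_ (measure_mono (subset_univ C))
    rw [pietschMeasure_univ L hpos hL1]; exact ENNReal.one_ne_top
  have h3 := ENNReal.toReal_mono hfin h2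
  rw [ENNReal.coe_toReal] at h3
  calc L g = ((Real.toNNReal (L g) : ℝ≥0) : ℝ) := by
        rw [Real.coe_toNNReal _ (hpos g hg0)]
    _ = ((Lambda L hpos gNN : ℝ≥0) : ℝ) := by rw [hLg]
    _ ≤ ((rieszContentAux (Lambda L hpos) ⟨C, hC⟩ : ℝ≥0) : ℝ) := by exact_mod_cast h1
    _ ≤ (pietschMeasure L hpos C).toReal := h3



lemma L_le_integral_aux (hL1 : L 1 = 1) (g : C(X, ℝ)) (hg0 : ∀ x, 0 ≤ g x)
    (hg1 : ∀ x, g x ≤ 1) :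
    L g ≤ ∫ x, g x ∂(pietschMeasure L hpos) := by
  set μ := pietschMeasure L hpos with hμ
  have hprob : μ univ = 1 := pietschMeasure_univ L hpos hL1
  have hfin : IsFiniteMeasure μ := ⟨by rw [hprob]; exact ENNReal.one_lt_top⟩
  have key : ∀ n : ℕ, 0 < n → L g ≤ 1 / n + ∫ x, g x ∂μ := by
    intro n hn
    have hn' : (0 : ℝ) < n := by exact_mod_cast hn
    set gk : ℕ → C(X, ℝ) := fun k =>
      ⟨fun x => min 1 (max 0 (n * g x - k)),
        continuous_const.min (continuous_const.max
          ((continuous_const.mul g.continuous).sub continuous_const))⟩ with hgk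
    have hgkap : ∀ k x, gk k x = min 1 (max 0 (n * g x - k)) := fun k x => rfl
    have hgk0 : ∀ k x, 0 ≤ gk k x := fun k x =>
      le_min zero_le_one (le_max_left 0 _)
    have hgk1 : ∀ k x, gk k x ≤ 1 := fun k x => min_le_left _ _
    have hsumg : ∑ k ∈ Finset.range n, gk k = (n : ℝ) • g := by
      ext x
      rw [ContinuousMap.coe_sum, Finset.sum_apply]
      simp only [hgkap, ContinuousMap.smul_apply, smul_eq_mul]
      exact sum_clamp n (n * g x) (mul_nonneg (Nat.cast_nonneg n) (hg0 x))
        (by nlinarith [mul_nonneg (le_of_lt hn') (sub_nonneg.2 (hg1 x))])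
    have hsum : ∑ k ∈ Finset.range n, L (gk k) = n * L g := by
      rw [← map_sum, hsumg, L.map_smul, smul_eq_mul]
    set Ck : ℕ → Set X := fun k => {x | (k : ℝ) / n ≤ g x} with hCk
    have hCkcl : ∀ k, IsClosed (Ck k) := fun k =>
      isClosed_le continuous_const g.continuous
    have hCkc : ∀ k, IsCompact (Ck k) := fun k => (hCkcl k).isCompact
    have hLgk : ∀ k : ℕ, L (gk k) ≤ (μ (Ck k)).toReal := by
      intro k
      refine L_le_measure_compact L hpos hL1 (gk k) (hgk0 k) (hgk1 k) (hCkc k) ?_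
      intro x hne
      by_contra hmem
      apply hne
      have hlt : g x < k / n := by
        simpa [hCk] using hmem
      have h6 : n * g x - k ≤ 0 := by
        rw [div_eq_mul_inv] at hlt
        have := (lt_div_iff₀ hn').1 (by rwa [div_eq_mul_inv])
        nlinarith
      rw [hgkap, max_eq_left h6, min_eq_right zero_le_one]
    obtain ⟨n', rfl⟩ : ∃ n', n = n' + 1 := ⟨n - 1, (Nat.succ_pred_eq_of_pos hn).symm⟩
    have hμfin : ∀ s : Set X, μ s ≠ ⊤ := fun s => measure_ne_top μ s
    have hC0 : (μ (Ck 0)).toReal ≤ 1 := by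
      have := measure_mono (μ := μ) (subset_univ (Ck 0))
      rw [hprob] at this
      have := ENNReal.toReal_mono ENNReal.one_ne_top this
      simpa using this
    have hind : ∀ x, ∑ k ∈ Finset.range n',
        Set.indicator (Ck (k + 1)) (fun _ => (1 : ℝ)) x ≤ (n' + 1 : ℕ) * g x := by
      intro x
      have hle : ∀ k ∈ Finset.range n',
          Set.indicator (Ck (k + 1)) (fun _ => (1 : ℝ)) x
            ≤ min 1 (max 0 ((n' + 1 : ℕ) * g x - k)) := by
        intro k _
        by_cases hx : x ∈ Ck (k + 1)
        · rw [Set.indicator_of_mem hx]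
          have h7 : ((k : ℝ) + 1) / (n' + 1 : ℕ) ≤ g x := by
            have := hx
            simp only [hCk, mem_setOf_eq] at this
            push_cast at this ⊢
            exact this
          have h8 : (1 : ℝ) ≤ (n' + 1 : ℕ) * g x - k := by
            have hnn : (0 : ℝ) < ((n' + 1 : ℕ) : ℝ) := by positivity
            rw [div_le_iff₀ hnn] at h7
            nlinarith
          rw [max_eq_right (by linarith), min_eq_left h8]
        · rw [Set.indicator_of_notMem hx]
          exact hgk0 k x
      calc ∑ k ∈ Finset.range n', Set.indicator (Ck (k + 1)) (fun _ => (1 : ℝ)) x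
          ≤ ∑ k ∈ Finset.range n', min 1 (max 0 ((n' + 1 : ℕ) * g x - k)) :=
            Finset.sum_le_sum hle
        _ ≤ ∑ k ∈ Finset.range (n' + 1), min 1 (max 0 ((n' + 1 : ℕ) * g x - k)) :=
            Finset.sum_le_sum_of_subset_of_nonneg
              (Finset.range_subset_range.2 (Nat.le_succ n'))
              (fun k _ _ => le_min zero_le_one (le_max_left 0 _))
        _ = (n' + 1 : ℕ) * g x := sum_clamp _ _
            (mul_nonneg (Nat.cast_nonneg _) (hg0 x))
            (by
              have hc : (0:ℝ) ≤ ((n' + 1 : ℕ) : ℝ) := Nat.cast_nonneg _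
              nlinarith [mul_nonneg hc (sub_nonneg.2 (hg1 x))])
    have hintind : ∀ k : ℕ, Integrable
        (fun x => Set.indicator (Ck (k + 1)) (fun _ => (1 : ℝ)) x) μ := fun k =>
      (integrable_const (1 : ℝ)).indicator (hCkcl (k + 1)).measurableSet
    have hsum2 : ∑ k ∈ Finset.range n', (μ (Ck (k + 1))).toReal
        ≤ (n' + 1 : ℕ) * ∫ x, g x ∂μ := by
      have e1 : ∀ k : ℕ, (μ (Ck (k + 1))).toReal
          = ∫ x, Set.indicator (Ck (k + 1)) (fun _ => (1 : ℝ)) x ∂μ := by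
        intro k
        rw [integral_indicator_const (1 : ℝ) (hCkcl (k + 1)).measurableSet, smul_eq_mul,
          mul_one]
        rfl
      calc ∑ k ∈ Finset.range n', (μ (Ck (k + 1))).toReal
          = ∫ x, ∑ k ∈ Finset.range n',
              Set.indicator (Ck (k + 1)) (fun _ => (1 : ℝ)) x ∂μ := by
            rw [integral_finset_sum _ (fun k _ => hintind k)]
            exact Finset.sum_congr rfl fun k _ => e1 k
        _ ≤ ∫ x, (n' + 1 : ℕ) * g x ∂μ := by
            refine integral_mono (integrable_finset_sum _ (fun k _ => hintind k)) ?_ hind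
            exact (integrable_cm g).const_mul _
        _ = (n' + 1 : ℕ) * ∫ x, g x ∂μ := integral_const_mul _ _
    have hmain : ((n' + 1 : ℕ) : ℝ) * L g ≤ 1 + (n' + 1 : ℕ) * ∫ x, g x ∂μ := by
      calc ((n' + 1 : ℕ) : ℝ) * L g = ∑ k ∈ Finset.range (n' + 1), L (gk k) := hsum.symm
        _ ≤ ∑ k ∈ Finset.range (n' + 1), (μ (Ck k)).toReal :=
            Finset.sum_le_sum fun k _ => hLgk k
        _ = (∑ k ∈ Finset.range n', (μ (Ck (k + 1))).toReal) + (μ (Ck 0)).toReal :=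
            Finset.sum_range_succ' _ _
        _ ≤ (n' + 1 : ℕ) * ∫ x, g x ∂μ + 1 := add_le_add hsum2 hC0
        _ = 1 + (n' + 1 : ℕ) * ∫ x, g x ∂μ := by ring
    have h9 : L g - ∫ x, g x ∂μ ≤ 1 / ((n' + 1 : ℕ) : ℝ) := by
      rw [le_div_iff₀ hn']
      nlinarith
    linarith
  by_contra hcon
  push_neg at hcon
  obtain ⟨n, hn⟩ := exists_nat_one_div_lt (sub_pos.2 hcon)
  have hkey := key (n + 1) (Nat.succ_pos n)
  have hcast : (1 : ℝ) / ((n + 1 : ℕ) : ℝ) = 1 / ((n : ℝ) + 1) := by push_cast; ring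
  rw [hcast] at hkey
  linarith

lemma L_le_integral (hL1 : L 1 = 1) (g : C(X, ℝ)) (hg0 : ∀ x, 0 ≤ g x) :
    L g ≤ ∫ x, g x ∂(pietschMeasure L hpos) := by
  set μ := pietschMeasure L hpos with hμ
  have hprob : μ univ = 1 := pietschMeasure_univ L hpos hL1
  have hfin : IsFiniteMeasure μ := ⟨by rw [hprob]; exact ENNReal.one_lt_top⟩
  set M : ℝ := ‖g‖ + 1 with hM
  have hMpos : 0 < M := by positivity
  have h1 : ∀ x, (M⁻¹ • g) x ≤ 1 := by
    intro x
    rw [ContinuousMap.smul_apply, smul_eq_mul, inv_mul_le_iff₀ hMpos, mul_one]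
    have := g.norm_coe_le_norm x
    have := le_abs_self (g x)
    rw [Real.norm_eq_abs] at *
    linarith
  have h0 : ∀ x, 0 ≤ (M⁻¹ • g) x := fun x => by
    rw [ContinuousMap.smul_apply, smul_eq_mul]
    exact mul_nonneg (inv_nonneg.2 hMpos.le) (hg0 x)
  have h2 := L_le_integral_aux L hpos hL1 (M⁻¹ • g) h0 h1
  rw [L.map_smul, smul_eq_mul] at h2
  have h3 : ∫ x, (M⁻¹ • g) x ∂μ = M⁻¹ * ∫ x, g x ∂μ := by
    simp only [ContinuousMap.smul_apply, smul_eq_mul]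
    exact integral_const_mul _ _
  rw [h3] at h2
  calc L g = M * (M⁻¹ * L g) := by field_simp
    _ ≤ M * (M⁻¹ * ∫ x, g x ∂μ) := by
        exact mul_le_mul_of_nonneg_left h2 hMpos.le
    _ = ∫ x, g x ∂μ := by field_simp

/-- One-sided Riesz representation for a positive normalized functional on `C(X, ℝ)`. -/
theorem exists_rep (hL1 : L 1 = 1) :
    ∃ μ : Measure X, μ.Regular ∧ IsProbabilityMeasure μ ∧
      ∀ g : C(X, ℝ), (∀ x, 0 ≤ g x) → L g ≤ ∫ x, g x ∂μ :=
  ⟨pietschMeasure L hpos, pietschMeasure_regular L hpos,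
    ⟨pietschMeasure_univ L hpos hL1⟩, fun g hg => L_le_integral L hpos hL1 g hg⟩

end Meas

section Pietsch

variable {E G K H : Type*}
    [NormedAddCommGroup G] [NormedSpace ℝ G]
    [TopologicalSpace K] [CompactSpace K] [T2Space K] [Nonempty K]
    [MeasurableSpace K] [BorelSpace K]

omit hpos

theorem pietsch_forward
    (f : H) (R : K → E → G → ℝ) (S : H → E → G → ℝ)
    (hR_nonneg : ∀ (φ : K) (x : E) (b : G), 0 ≤ R φ x b)
    (hS_nonneg : ∀ (g : H) (x : E) (b : G), 0 ≤ S g x b)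
    (hRcont : ∀ (x : E) (b : G), Continuous fun φ : K => R φ x b)
    (hRS_hom : ∀ (φ : K) (x : E) (b : G) (η : ℝ), 0 ≤ η → η ≤ 1 →
        R φ x (η • b) ≤ η * R φ x b ∧ η * S f x b ≤ S f x (η • b))
    (p : ℝ) (hp : 0 < p) (C₁ : ℝ) (hC₁ : 0 < C₁)
    (hsum : ∀ (m : ℕ) (x : Fin m → E) (b : Fin m → G),
        ∑ j, S f (x j) (b j) ^ p ≤ C₁ * ⨆ φ : K, ∑ j, R φ (x j) (b j) ^ p) :
    ∃ μ : Measure K, μ.Regular ∧ IsProbabilityMeasure μ ∧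
      ∀ (x : E) (b : G),
        S f x b ≤ C₁ ^ (1 / p) * (∫ φ, R φ x b ^ p ∂μ) ^ (1 / p) := by
  classical
  -- the continuous functions associated to finite families
  have contR : ∀ (m : ℕ) (x : Fin m → E) (b : Fin m → G),
      Continuous fun φ : K => C₁ * ∑ j, R φ (x j) (b j) ^ p
        - ∑ j, S f (x j) (b j) ^ p := by
    intro m x b
    exact (continuous_const.mul (continuous_finset_sum _ fun j _ =>
      (hRcont (x j) (b j)).rpow_const fun φ => Or.inr hp.le)).sub continuous_const
  set gF : ∀ (m : ℕ), (Fin m → E) → (Fin m → G) → C(K, ℝ) := fun m x b =>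
    ⟨fun φ => C₁ * ∑ j, R φ (x j) (b j) ^ p - ∑ j, S f (x j) (b j) ^ p,
      contR m x b⟩ with hgF
  have hgFap : ∀ (m : ℕ) (x : Fin m → E) (b : Fin m → G) (φ : K),
      gF m x b φ = C₁ * ∑ j, R φ (x j) (b j) ^ p - ∑ j, S f (x j) (b j) ^ p :=
    fun m x b φ => rfl
  -- every `gF` is somewhere nonnegative
  have hgFpos : ∀ (m : ℕ) (x : Fin m → E) (b : Fin m → G), ∃ φ₀, 0 ≤ gF m x b φ₀ := by
    intro m x b
    have hcont : Continuous fun φ : K => ∑ j, R φ (x j) (b j) ^ p :=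
      continuous_finset_sum _ fun j _ =>
        (hRcont (x j) (b j)).rpow_const fun φ => Or.inr hp.le
    obtain ⟨φ₀, _, hφ₀⟩ := isCompact_univ.exists_isMaxOn univ_nonempty hcont.continuousOn
    refine ⟨φ₀, ?_⟩
    have hsup : (⨆ φ : K, ∑ j, R φ (x j) (b j) ^ p)
        = ∑ j, R φ₀ (x j) (b j) ^ p := by
      refine le_antisymm (ciSup_le fun φ => hφ₀ (mem_univ φ)) ?_
      exact le_ciSup ⟨∑ j, R φ₀ (x j) (b j) ^ p, by
        rintro _ ⟨φ, rfl⟩; exact hφ₀ (mem_univ φ)⟩ φ₀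
    have := hsum m x b
    rw [hsup] at this
    rw [hgFap]
    linarith
  -- the convex "upper set"
  set T : Set C(K, ℝ) := {h | ∃ (m : ℕ) (x : Fin m → E) (b : Fin m → G),
    ∀ φ, gF m x b φ ≤ h φ} with hT
  set Neg : Set C(K, ℝ) := {h | ∀ φ, h φ < 0} with hNeg
  -- scaling inequality
  have hscale : ∀ (a : ℝ), 0 ≤ a → a ≤ 1 → ∀ (x : E) (b : G) (φ : K),
      R φ x (a ^ (1 / p) • b) ^ p ≤ a * R φ x b ^ p
        ∧ a * S f x b ^ p ≤ S f x (a ^ (1 / p) • b) ^ p := by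
    intro a ha ha1 x b φ
    set η := a ^ (1 / p) with hη
    have hη0 : 0 ≤ η := Real.rpow_nonneg ha _
    have hη1 : η ≤ 1 := Real.rpow_le_one ha ha1 (by positivity)
    have hηp : η ^ p = a := by
      rw [hη, one_div, Real.rpow_inv_rpow ha hp.ne']
    obtain ⟨hRs, hSs⟩ := hRS_hom φ x b η hη0 hη1
    constructor
    · calc R φ x (η • b) ^ p ≤ (η * R φ x b) ^ p :=
            Real.rpow_le_rpow (hR_nonneg _ _ _) hRs hp.le
        _ = η ^ p * R φ x b ^ p := Real.mul_rpow hη0 (hR_nonneg _ _ _)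
        _ = a * R φ x b ^ p := by rw [hηp]
    · calc a * S f x b ^ p = η ^ p * S f x b ^ p := by rw [hηp]
        _ = (η * S f x b) ^ p := (Real.mul_rpow hη0 (hS_nonneg _ _ _)).symm
        _ ≤ S f x (η • b) ^ p := Real.rpow_le_rpow
            (mul_nonneg hη0 (hS_nonneg _ _ _)) hSs hp.le
  -- convexity of T
  have hTconv : Convex ℝ T := by
    rintro h₁ ⟨m₁, x₁, b₁, hh₁⟩ h₂ ⟨m₂, x₂, b₂, hh₂⟩ a c ha hc hac
    refine ⟨m₁ + m₂, Fin.append x₁ x₂,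
      Fin.append (fun j => a ^ (1 / p) • b₁ j) (fun j => c ^ (1 / p) • b₂ j), ?_⟩
    intro φ
    have ha1 : a ≤ 1 := by linarith
    have hc1 : c ≤ 1 := by linarith
    have hR1 : ∀ j : Fin m₁,
        R φ (x₁ j) (a ^ (1 / p) • b₁ j) ^ p ≤ a * R φ (x₁ j) (b₁ j) ^ p :=
      fun j => (hscale a ha ha1 (x₁ j) (b₁ j) φ).1
    have hR2 : ∀ j : Fin m₂,
        R φ (x₂ j) (c ^ (1 / p) • b₂ j) ^ p ≤ c * R φ (x₂ j) (b₂ j) ^ p :=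
      fun j => (hscale c hc hc1 (x₂ j) (b₂ j) φ).1
    have hS1 : ∀ j : Fin m₁,
        a * S f (x₁ j) (b₁ j) ^ p ≤ S f (x₁ j) (a ^ (1 / p) • b₁ j) ^ p :=
      fun j => (hscale a ha ha1 (x₁ j) (b₁ j) φ).2
    have hS2 : ∀ j : Fin m₂,
        c * S f (x₂ j) (b₂ j) ^ p ≤ S f (x₂ j) (c ^ (1 / p) • b₂ j) ^ p :=
      fun j => (hscale c hc hc1 (x₂ j) (b₂ j) φ).2
    rw [hgFap]
    simp only [Fin.sum_univ_add, Fin.append_left, Fin.append_right]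
    have e1 : ∑ j : Fin m₁, R φ (x₁ j) (a ^ (1 / p) • b₁ j) ^ p
        ≤ a * ∑ j : Fin m₁, R φ (x₁ j) (b₁ j) ^ p := by
      rw [Finset.mul_sum]; exact Finset.sum_le_sum fun j _ => hR1 j
    have e2 : ∑ j : Fin m₂, R φ (x₂ j) (c ^ (1 / p) • b₂ j) ^ p
        ≤ c * ∑ j : Fin m₂, R φ (x₂ j) (b₂ j) ^ p := by
      rw [Finset.mul_sum]; exact Finset.sum_le_sum fun j _ => hR2 j
    have e3 : a * ∑ j : Fin m₁, S f (x₁ j) (b₁ j) ^ p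
        ≤ ∑ j : Fin m₁, S f (x₁ j) (a ^ (1 / p) • b₁ j) ^ p := by
      rw [Finset.mul_sum]; exact Finset.sum_le_sum fun j _ => hS1 j
    have e4 : c * ∑ j : Fin m₂, S f (x₂ j) (b₂ j) ^ p
        ≤ ∑ j : Fin m₂, S f (x₂ j) (c ^ (1 / p) • b₂ j) ^ p := by
      rw [Finset.mul_sum]; exact Finset.sum_le_sum fun j _ => hS2 j
    have hg1 := hh₁ φ
    have hg2 := hh₂ φ
    rw [hgFap] at hg1 hg2
    simp only [ContinuousMap.add_apply, ContinuousMap.smul_apply, smul_eq_mul]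
    nlinarith [mul_le_mul_of_nonneg_left e1 hC₁.le, mul_le_mul_of_nonneg_left e2 hC₁.le,
      mul_le_mul_of_nonneg_left hg1 ha, mul_le_mul_of_nonneg_left hg2 hc]
  -- Neg is open and convex
  have hNegopen : IsOpen Neg := by
    rw [Metric.isOpen_iff]
    intro h hh
    obtain ⟨φm, _, hφm⟩ := isCompact_univ.exists_isMaxOn univ_nonempty
      (map_continuous h).continuousOn
    refine ⟨-h φm, by simpa using hh φm, ?_⟩
    intro h' hh'
    intro φ
    have h1 : h' φ - h φ ≤ ‖h' - h‖ := by
      calc h' φ - h φ ≤ |h' φ - h φ| := le_abs_self _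
        _ = ‖(h' - h) φ‖ := by rw [ContinuousMap.sub_apply, Real.norm_eq_abs]
        _ ≤ ‖h' - h‖ := ContinuousMap.norm_coe_le_norm _ _
    have h2 : ‖h' - h‖ < -h φm := by rwa [← dist_eq_norm]
    have h3 : h φ ≤ h φm := hφm (mem_univ φ)
    linarith
  have hNegconv : Convex ℝ Neg := by
    rintro h₁ hh₁ h₂ hh₂ a c ha hc hac
    intro φ
    simp only [ContinuousMap.add_apply, ContinuousMap.smul_apply, smul_eq_mul]
    rcases ha.lt_or_eq with ha' | ha'
    · nlinarith [hh₁ φ, hh₂ φ, mul_nonpos_of_nonneg_of_nonpos hc (le_of_lt (hh₂ φ))]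
    · have : a = 0 := ha'.symm
      subst this
      have : c = 1 := by linarith
      subst this
      simpa using hh₂ φ
  -- they are disjoint
  have hdisj : Disjoint Neg T := by
    rw [Set.disjoint_left]
    rintro h hhNeg ⟨m, x, b, hhT⟩
    obtain ⟨φ₀, hφ₀⟩ := hgFpos m x b
    exact absurd (hφ₀.trans (hhT φ₀)) (not_le.2 (hhNeg φ₀))
  -- separation
  obtain ⟨L', u, hL'Neg, hL'T⟩ := geometric_hahn_banach_open hNegconv hNegopen hTconv hdisj
  have hzeroT : (0 : C(K, ℝ)) ∈ T := by
    refine ⟨0, Fin.elim0, Fin.elim0, fun φ => ?_⟩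
    rw [hgFap]
    simp
  have hu0 : u ≤ 0 := by simpa using hL'T 0 hzeroT
  have hL'1 : 0 < L' 1 := by
    have hmem : (-1 : C(K, ℝ)) ∈ Neg := fun φ => by
      simp
    have := hL'Neg _ hmem
    rw [map_neg] at this
    linarith
  have huge : 0 ≤ u := by
    by_contra hcon
    push_neg at hcon
    set ε : ℝ := -u / (2 * L' 1) with hε
    have hεpos : 0 < ε := by
      apply div_pos (by linarith) (by linarith)
    have hmem : ((-ε) • (1 : C(K, ℝ))) ∈ Neg := fun φ => by
      simp only [ContinuousMap.smul_apply, ContinuousMap.one_apply, smul_eq_mul, mul_one]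
      linarith
    have := hL'Neg _ hmem
    rw [L'.map_smul, smul_eq_mul] at this
    rw [hε] at this
    have h2 : -(-u / (2 * L' 1)) * L' 1 = u / 2 := by
      field_simp
    rw [h2] at this
    linarith
  have hueq : u = 0 := le_antisymm hu0 huge
  -- positivity of L'
  have hL'pos : ∀ g : C(K, ℝ), (∀ φ, 0 ≤ g φ) → 0 ≤ L' g := by
    intro g hg
    by_contra hcon
    push_neg at hcon
    set ε : ℝ := -L' g / (2 * L' 1) with hε
    have hεpos : 0 < ε := div_pos (by linarith) (by linarith)
    have hmem : (-g - ε • (1 : C(K, ℝ))) ∈ Neg := fun φ => by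
      simp only [ContinuousMap.sub_apply, ContinuousMap.neg_apply,
        ContinuousMap.smul_apply, ContinuousMap.one_apply, smul_eq_mul, mul_one]
      have := hg φ
      linarith
    have h1 := hL'Neg _ hmem
    rw [map_sub, map_neg, L'.map_smul, smul_eq_mul, hueq] at h1
    rw [hε] at h1
    have h2 : -L' g / (2 * L' 1) * L' 1 = -L' g / 2 := by field_simp
    rw [h2] at h1
    linarith
  -- normalize
  set L : C(K, ℝ) →L[ℝ] ℝ := (L' 1)⁻¹ • L' with hLdef
  have hLap : ∀ g, L g = (L' 1)⁻¹ * L' g := fun g => rfl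
  have hLpos : ∀ g : C(K, ℝ), (∀ φ, 0 ≤ g φ) → 0 ≤ L g := by
    intro g hg
    rw [hLap]
    exact mul_nonneg (inv_nonneg.2 hL'1.le) (hL'pos g hg)
  have hL1 : L 1 = 1 := by
    rw [hLap, inv_mul_cancel₀ hL'1.ne']
  obtain ⟨μ, hreg, hprob, hint⟩ := exists_rep L hLpos hL1
  refine ⟨μ, hreg, hprob, ?_⟩
  intro x b
  -- the single-element family
  set rpb : C(K, ℝ) := ⟨fun φ => R φ x b ^ p,
    (hRcont x b).rpow_const fun φ => Or.inr hp.le⟩ with hrpb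
  have hmemT : gF 1 (fun _ => x) (fun _ => b) ∈ T :=
    ⟨1, (fun _ => x), (fun _ => b), fun φ => le_refl _⟩
  have hgFsplit : gF 1 (fun _ => x) (fun _ => b)
      = C₁ • rpb - (S f x b ^ p) • (1 : C(K, ℝ)) := by
    ext φ
    rw [hgFap]
    simp [hrpb, Fin.sum_univ_one]
  have h1 : 0 ≤ L' (gF 1 (fun _ => x) (fun _ => b)) := by
    have := hL'T _ hmemT
    rw [hueq] at this
    exact this
  have h2 : 0 ≤ L (gF 1 (fun _ => x) (fun _ => b)) := by
    rw [hLap]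
    exact mul_nonneg (inv_nonneg.2 hL'1.le) h1
  rw [hgFsplit, map_sub, L.map_smul, L.map_smul, smul_eq_mul, smul_eq_mul, hL1, mul_one] at h2
  -- S^p ≤ C₁ * L rpb ≤ C₁ * ∫ rpb
  have h3 : L rpb ≤ ∫ φ, rpb φ ∂μ := hint rpb fun φ => Real.rpow_nonneg (hR_nonneg _ _ _) _
  have h4 : S f x b ^ p ≤ C₁ * ∫ φ, R φ x b ^ p ∂μ := by
    have h6 : C₁ * L rpb ≤ C₁ * ∫ φ, rpb φ ∂μ := mul_le_mul_of_nonneg_left h3 hC₁.le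
    have h5 : ∫ φ, rpb φ ∂μ = ∫ φ, R φ x b ^ p ∂μ := rfl
    rw [h5] at h6
    linarith
  have hInonneg : 0 ≤ ∫ φ, R φ x b ^ p ∂μ :=
    integral_nonneg fun φ => Real.rpow_nonneg (hR_nonneg _ _ _) _
  calc S f x b = (S f x b ^ p) ^ (1 / p) := by
        rw [one_div, Real.rpow_rpow_inv (hS_nonneg _ _ _) hp.ne']
    _ ≤ (C₁ * ∫ φ, R φ x b ^ p ∂μ) ^ (1 / p) :=
        Real.rpow_le_rpow (Real.rpow_nonneg (hS_nonneg _ _ _) _) h4 (by positivity)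
    _ = C₁ ^ (1 / p) * (∫ φ, R φ x b ^ p ∂μ) ^ (1 / p) :=
        Real.mul_rpow hC₁.le hInonneg


theorem pietsch_backward
    (f : H) (R : K → E → G → ℝ) (S : H → E → G → ℝ)
    (hR_nonneg : ∀ (φ : K) (x : E) (b : G), 0 ≤ R φ x b)
    (hS_nonneg : ∀ (g : H) (x : E) (b : G), 0 ≤ S g x b)
    (hRcont : ∀ (x : E) (b : G), Continuous fun φ : K => R φ x b)
    (p : ℝ) (hp : 0 < p) (C : ℝ) (hC : 0 < C)
    (μ : Measure K) (hprob : IsProbabilityMeasure μ)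
    (hdom : ∀ (x : E) (b : G), S f x b ≤ C * (∫ φ, R φ x b ^ p ∂μ) ^ (1 / p)) :
    ∀ (m : ℕ) (x : Fin m → E) (b : Fin m → G),
      ∑ j, S f (x j) (b j) ^ p ≤ C ^ p * ⨆ φ : K, ∑ j, R φ (x j) (b j) ^ p := by
  haveI := hprob
  intro m x b
  have hcontj : ∀ j : Fin m, Continuous fun φ : K => R φ (x j) (b j) ^ p := fun j =>
    (hRcont _ _).rpow_const fun φ => Or.inr hp.le
  have hInn : ∀ j : Fin m, 0 ≤ ∫ φ, R φ (x j) (b j) ^ p ∂μ := fun j =>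
    integral_nonneg fun φ => Real.rpow_nonneg (hR_nonneg _ _ _) _
  have hterm : ∀ j : Fin m,
      S f (x j) (b j) ^ p ≤ C ^ p * ∫ φ, R φ (x j) (b j) ^ p ∂μ := by
    intro j
    have h1 := Real.rpow_le_rpow (hS_nonneg _ _ _) (hdom (x j) (b j)) hp.le
    rwa [Real.mul_rpow hC.le (Real.rpow_nonneg (hInn j) _), one_div,
      Real.rpow_inv_rpow (hInn j) hp.ne'] at h1
  have hint : ∀ j : Fin m, Integrable (fun φ => R φ (x j) (b j) ^ p) μ := fun j =>
    integrable_cm (X := K) ⟨fun φ => R φ (x j) (b j) ^ p, hcontj j⟩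
  have hsum1 : ∑ j, S f (x j) (b j) ^ p
      ≤ C ^ p * ∑ j, ∫ φ, R φ (x j) (b j) ^ p ∂μ := by
    rw [Finset.mul_sum]
    exact Finset.sum_le_sum fun j _ => hterm j
  have hsum2 : ∑ j, ∫ φ, R φ (x j) (b j) ^ p ∂μ
      = ∫ φ, ∑ j, R φ (x j) (b j) ^ p ∂μ :=
    (integral_finset_sum _ fun j _ => hint j).symm
  have hcontsum : Continuous fun φ : K => ∑ j, R φ (x j) (b j) ^ p :=
    continuous_finset_sum _ fun j _ => hcontj j
  have hbdd : BddAbove (Set.range fun φ : K => ∑ j, R φ (x j) (b j) ^ p) :=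
    (isCompact_range hcontsum).bddAbove
  have hptwise : ∀ φ : K, ∑ j, R φ (x j) (b j) ^ p
      ≤ ⨆ ψ : K, ∑ j, R ψ (x j) (b j) ^ p := fun φ => le_ciSup hbdd φ
  have hsum3 : ∫ φ, ∑ j, R φ (x j) (b j) ^ p ∂μ
      ≤ ⨆ φ : K, ∑ j, R φ (x j) (b j) ^ p := by
    have h2 : ∫ φ, ∑ j, R φ (x j) (b j) ^ p ∂μ
        ≤ ∫ _, (⨆ φ : K, ∑ j, R φ (x j) (b j) ^ p) ∂μ :=
      integral_mono (integrable_finset_sum _ fun j _ => hint j)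
        (integrable_const _) hptwise
    rwa [integral_const, probReal_univ, one_smul] at h2
  calc ∑ j, S f (x j) (b j) ^ p ≤ C ^ p * ∑ j, ∫ φ, R φ (x j) (b j) ^ p ∂μ := hsum1
    _ = C ^ p * ∫ φ, ∑ j, R φ (x j) (b j) ^ p ∂μ := by rw [hsum2]
    _ ≤ C ^ p * ⨆ φ : K, ∑ j, R φ (x j) (b j) ^ p :=
        mul_le_mul_of_nonneg_left hsum3 (Real.rpow_nonneg hC.le _)

end Pietsch

end PietschAux

end


/-- The unified Pietsch domination theorem: `f` is `R`-`S`-abstract `p`-summing if and only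
if it satisfies a Pietsch-type domination by some regular Borel probability measure on `K`;
moreover, in that case the infimum of the admissible domination constants `C` equals
`π_{RS,p}(f) ^ (1/p)`. -/
theorem unified_pietsch_domination
    {E G K H : Type*}
    [NormedAddCommGroup G] [NormedSpace ℝ G] [CompleteSpace G]
    [TopologicalSpace K] [CompactSpace K] [T2Space K] [Nonempty K]
    [MeasurableSpace K] [BorelSpace K]
    (f : H) (R : K → E → G → ℝ) (S : H → E → G → ℝ)
    (hR_nonneg : ∀ (φ : K) (x : E) (b : G), 0 ≤ R φ x b)
    (hS_nonneg : ∀ (g : H) (x : E) (b : G), 0 ≤ S g x b)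
    (hzero : ∃ x₀ : E, ∀ (φ : K) (b : G), R φ x₀ b = 0 ∧ S f x₀ b = 0)
    (hRcont : ∀ (x : E) (b : G), Continuous fun φ : K => R φ x b)
    (hRS_hom : ∀ (φ : K) (x : E) (b : G) (η : ℝ), 0 ≤ η → η ≤ 1 →
        R φ x (η • b) ≤ η * R φ x b ∧ η * S f x b ≤ S f x (η • b))
    (p : ℝ) (hp : 0 < p) :
    ((∃ C₁ > 0, ∀ (m : ℕ) (x : Fin m → E) (b : Fin m → G),
        ∑ j, S f (x j) (b j) ^ p ≤ C₁ * ⨆ φ : K, ∑ j, R φ (x j) (b j) ^ p) ↔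
      (∃ C > 0, ∃ μ : Measure K, μ.Regular ∧ IsProbabilityMeasure μ ∧
        ∀ (x : E) (b : G), S f x b ≤ C * (∫ φ, R φ x b ^ p ∂μ) ^ (1 / p))) ∧
    ((∃ C₁ > 0, ∀ (m : ℕ) (x : Fin m → E) (b : Fin m → G),
        ∑ j, S f (x j) (b j) ^ p ≤ C₁ * ⨆ φ : K, ∑ j, R φ (x j) (b j) ^ p) →
      sInf {C : ℝ | 0 < C ∧ ∃ μ : Measure K, μ.Regular ∧ IsProbabilityMeasure μ ∧
          ∀ (x : E) (b : G), S f x b ≤ C * (∫ φ, R φ x b ^ p ∂μ) ^ (1 / p)} =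
        (sInf {C₁ : ℝ | 0 < C₁ ∧ ∀ (m : ℕ) (x : Fin m → E) (b : Fin m → G),
            ∑ j, S f (x j) (b j) ^ p ≤
              C₁ * ⨆ φ : K, ∑ j, R φ (x j) (b j) ^ p}) ^ (1 / p)) := by
  set A : Set ℝ := {C₁ : ℝ | 0 < C₁ ∧ ∀ (m : ℕ) (x : Fin m → E) (b : Fin m → G),
      ∑ j, S f (x j) (b j) ^ p ≤ C₁ * ⨆ φ : K, ∑ j, R φ (x j) (b j) ^ p} with hA
  set B : Set ℝ := {C : ℝ | 0 < C ∧ ∃ μ : Measure K, μ.Regular ∧ IsProbabilityMeasure μ ∧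
      ∀ (x : E) (b : G), S f x b ≤ C * (∫ φ, R φ x b ^ p ∂μ) ^ (1 / p)} with hB
  have hfwd : ∀ C₁ ∈ A, C₁ ^ (1 / p) ∈ B := by
    rintro C₁ ⟨hC₁, hs⟩
    obtain ⟨μ, hreg, hprob, hdom⟩ := PietschAux.pietsch_forward f R S hR_nonneg hS_nonneg
      hRcont hRS_hom p hp C₁ hC₁ hs
    exact ⟨Real.rpow_pos_of_pos hC₁ _, μ, hreg, hprob, hdom⟩
  have hbwd : ∀ C ∈ B, C ^ p ∈ A := by
    rintro C ⟨hCpos, μ, hreg, hprob, hdom⟩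
    exact ⟨Real.rpow_pos_of_pos hCpos _, PietschAux.pietsch_backward f R S hR_nonneg
      hS_nonneg hRcont p hp C hCpos μ hprob hdom⟩
  have hAlb : ∀ a ∈ A, (0 : ℝ) ≤ a := fun a ha => ha.1.le
  have hBlb : ∀ a ∈ B, (0 : ℝ) ≤ a := fun a ha => ha.1.le
  have hbddA : BddBelow A := ⟨0, fun a ha => hAlb a ha⟩
  have hbddB : BddBelow B := ⟨0, fun a ha => hBlb a ha⟩
  have hA0 : 0 ≤ sInf A := Real.sInf_nonneg hAlb
  have hB0 : 0 ≤ sInf B := Real.sInf_nonneg hBlb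
  constructor
  · constructor
    · rintro ⟨C₁, hC₁, hs⟩
      obtain ⟨hCpos, μ, hreg, hprob, hdom⟩ := hfwd C₁ ⟨hC₁, hs⟩
      exact ⟨C₁ ^ (1 / p), hCpos, μ, hreg, hprob, hdom⟩
    · rintro ⟨C, hC, μ, hreg, hprob, hdom⟩
      obtain ⟨hCpos, hs⟩ := hbwd C ⟨hC, μ, hreg, hprob, hdom⟩
      exact ⟨C ^ p, hCpos, hs⟩
  · rintro ⟨C₁0, hC₁0, hs0⟩
    have hAne : A.Nonempty := ⟨C₁0, hC₁0, hs0⟩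
    have hBne : B.Nonempty := ⟨C₁0 ^ (1 / p), hfwd C₁0 ⟨hC₁0, hs0⟩⟩
    refine le_antisymm ?_ ?_
    · have h1 : (sInf B) ^ p ≤ sInf A := by
        refine le_csInf hAne fun C₁ hC₁ => ?_
        have h2 : sInf B ≤ C₁ ^ (1 / p) := csInf_le hbddB (hfwd C₁ hC₁)
        have h3 := Real.rpow_le_rpow hB0 h2 hp.le
        rwa [one_div, Real.rpow_inv_rpow hC₁.1.le hp.ne'] at h3
      calc sInf B = ((sInf B) ^ p) ^ (1 / p) := by
            rw [one_div, Real.rpow_rpow_inv hB0 hp.ne']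
        _ ≤ (sInf A) ^ (1 / p) :=
            Real.rpow_le_rpow (Real.rpow_nonneg hB0 _) h1 (by positivity)
    · refine le_csInf hBne fun C hC => ?_
      have h1 : sInf A ≤ C ^ p := csInf_le hbddA (hbwd C hC)
      have h2 := Real.rpow_le_rpow hA0 h1 (by positivity : (0:ℝ) ≤ 1 / p)
      rw [one_div, Real.rpow_rpow_inv hC.1.le hp.ne'] at h2
      rwa [one_div]
end

section
/- Let X and Y be metric spaces, fix a base point x₀ ∈ X, and let 0 < p < ∞. A map T : X → Y is Lipschitz p-summing, i.e. there is a constant C₁ > 0 such that ∑_{j=1}^m a_j · d(T(x_j), T(y_j))^p ≤ C₁ · sup_{f ∈ B_{X^#}} ∑_{j=1}^m a_j · |f(x_j) − f(y_j)|^p for all m ∈ ℕ, all x₁,…,x_m, y₁,…,y_m ∈ X and all nonnegative reals a₁,…,a_m, if and only if there exist a constant C > 0 and a regular Borel probability measure μ on B_{X^#} such that d(T(x), T(y)) ≤ C · (∫_{B_{X^#}} |f(x) − f(y)|^p dμ(f))^{1/p} for all x, y ∈ X. -/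
open MeasureTheory TopologicalSpace
open scoped ENNReal NNReal

/-- The unit ball of the Lipschitz dual `X^#` of a pointed metric space `(X, x₀)`: all
real-valued Lipschitz functions on `X` with Lipschitz constant at most 1 vanishing at the
base point, equipped with the topology of pointwise convergence. -/
def lipDualBall (X : Type*) [MetricSpace X] (x₀ : X) : Set (X → ℝ) :=
  {f | LipschitzWith 1 f ∧ f x₀ = 0}

noncomputable instance (X : Type*) [MetricSpace X] (x₀ : X) :
    MeasurableSpace (lipDualBall X x₀) := borel _

instance (X : Type*) [MetricSpace X] (x₀ : X) :
    BorelSpace (lipDualBall X x₀) := ⟨rfl⟩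



section ball
variable {X : Type*} [MetricSpace X] (x₀ : X)

lemma lipDualBall_nonempty : Nonempty (lipDualBall X x₀) :=
  ⟨⟨fun _ => 0, LipschitzWith.const' 0, rfl⟩⟩

variable {x₀}

lemma lipDualBall_abs_sub_le (f : lipDualBall X x₀) (x y : X) :
    |(f : X → ℝ) x - (f : X → ℝ) y| ≤ dist x y := by
  have := f.2.1.dist_le_mul x y
  rwa [NNReal.coe_one, one_mul, Real.dist_eq] at this

variable (x₀)

lemma lipDualBall_isCompact : IsCompact (lipDualBall X x₀) := by
  have hsub : lipDualBall X x₀ ⊆ Set.pi Set.univ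
      (fun x => Set.Icc (-(dist x x₀)) (dist x x₀)) := by
    intro f hf x _
    have := lipDualBall_abs_sub_le (⟨f, hf⟩ : lipDualBall X x₀) x x₀
    simp only [hf.2, sub_zero] at this
    exact abs_le.mp this
  have hclosed : IsClosed (lipDualBall X x₀) := by
    have : lipDualBall X x₀ =
        (⋂ (x : X) (y : X), {f : X → ℝ | dist (f x) (f y) ≤ dist x y}) ∩
          {f : X → ℝ | f x₀ = 0} := by
      ext f
      simp only [lipDualBall, Set.mem_inter_iff, Set.mem_iInter, Set.mem_setOf_eq]
      constructor
      · rintro ⟨hlip, h0⟩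
        refine ⟨fun x y => ?_, h0⟩
        have := hlip.dist_le_mul x y
        rwa [NNReal.coe_one, one_mul] at this
      · rintro ⟨h, h0⟩
        refine ⟨LipschitzWith.of_dist_le_mul fun x y => ?_, h0⟩
        rw [NNReal.coe_one, one_mul]; exact h x y
    rw [this]
    refine IsClosed.inter (isClosed_iInter fun x => isClosed_iInter fun y => ?_) ?_
    · exact isClosed_le (by fun_prop) continuous_const
    · exact isClosed_eq (continuous_apply x₀) continuous_const
  exact (isCompact_univ_pi fun x => isCompact_Icc).of_isClosed_subset hclosed hsub

lemma lipDualBall_compactSpace : CompactSpace (lipDualBall X x₀) :=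
  isCompact_iff_compactSpace.mp (lipDualBall_isCompact x₀)

variable {x₀}

lemma continuous_eval_lipDualBall (x : X) :
    Continuous fun f : lipDualBall X x₀ => (f : X → ℝ) x :=
  (continuous_apply x).comp continuous_subtype_val

end ball
open scoped ENNReal NNReal

section RMK

variable {K : Type*} [TopologicalSpace K] [CompactSpace K] [T2Space K]
    [MeasurableSpace K] [BorelSpace K]

theorem content_apply_eq_coe_toFun {G : Type*} [TopologicalSpace G] (μ : Content G)
    (K : Compacts G) : μ K = (μ.toFun K : ℝ≥0∞) := rfl

theorem exists_rep_measure (φ : C(K, ℝ) →L[ℝ] ℝ)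
    (hpos : ∀ g : C(K, ℝ), (∀ z, 0 ≤ g z) → 0 ≤ φ g) (hone : φ 1 = 1) :
    ∃ μ : Measure K, μ.Regular ∧ IsProbabilityMeasure μ ∧
      ∀ g : C(K, ℝ), (∀ z, 0 ≤ g z) → φ g ≤ ∫ z, g z ∂μ := by
  -- monotonicity of φ
  have hmono : ∀ g h : C(K, ℝ), (∀ z, g z ≤ h z) → φ g ≤ φ h := by
    intro g h hle
    have h0 : 0 ≤ φ (h - g) := hpos _ fun z => by
      simp only [ContinuousMap.sub_apply]; linarith [hle z]
    rw [map_sub] at h0; linarith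
  -- the set of values of φ on functions dominating the indicator of C
  set S : Set K → Set ℝ := fun C =>
    {r | ∃ g : C(K, ℝ), (∀ z, 0 ≤ g z) ∧ (∀ z ∈ C, 1 ≤ g z) ∧ φ g = r} with hS
  have hne : ∀ C, (S C).Nonempty := fun C => ⟨1, 1, fun z => zero_le_one,
    fun z _ => le_of_eq (by simp), hone⟩
  have hbdd : ∀ C, BddBelow (S C) := fun C =>
    ⟨0, by rintro r ⟨g, hg, -, rfl⟩; exact hpos g hg⟩
  set lam : Set K → ℝ := fun C => sInf (S C) with hlam
  have lam_nonneg : ∀ C, 0 ≤ lam C := fun C =>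
    le_csInf (hne C) (by rintro r ⟨g, hg, -, rfl⟩; exact hpos g hg)
  have lam_le : ∀ C, ∀ r ∈ S C, lam C ≤ r := fun C r hr => csInf_le (hbdd C) hr
  have lam_mono : ∀ C₁ C₂ : Set K, C₁ ⊆ C₂ → lam C₁ ≤ lam C₂ := by
    intro C₁ C₂ hsub
    refine csInf_le_csInf (hbdd C₁) (hne C₂) ?_
    rintro r ⟨g, hg, hg1, rfl⟩
    exact ⟨g, hg, fun z hz => hg1 z (hsub hz), rfl⟩
  have lam_le_one : ∀ C, lam C ≤ 1 := fun C =>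
    lam_le C 1 ⟨1, fun z => zero_le_one, fun z _ => le_of_eq (by simp), hone⟩
  -- subadditivity
  have lam_union_le : ∀ C₁ C₂ : Set K, lam (C₁ ∪ C₂) ≤ lam C₁ + lam C₂ := by
    intro C₁ C₂
    have key : ∀ r₁ ∈ S C₁, ∀ r₂ ∈ S C₂, lam (C₁ ∪ C₂) ≤ r₁ + r₂ := by
      rintro r₁ ⟨g₁, hg₁, hg₁', rfl⟩ r₂ ⟨g₂, hg₂, hg₂', rfl⟩
      refine lam_le _ _ ⟨g₁ + g₂, fun z => by
          simpa using add_nonneg (hg₁ z) (hg₂ z), ?_, map_add φ g₁ g₂⟩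
      intro z hz
      rcases hz with hz | hz
      · simpa using le_add_of_le_of_nonneg (hg₁' z hz) (hg₂ z)
      · simpa using le_add_of_nonneg_of_le (hg₁ z) (hg₂' z hz)
    have h1 : lam (C₁ ∪ C₂) - lam C₂ ≤ lam C₁ := by
      refine le_csInf (hne C₁) fun r₁ h₁ => ?_
      have h2 : lam (C₁ ∪ C₂) - r₁ ≤ lam C₂ :=
        le_csInf (hne C₂) fun r₂ h₂ => by linarith [key r₁ h₁ r₂ h₂]
      linarith
    linarith
  -- superadditivity for disjoint closed sets
  have lam_disj : ∀ C₁ C₂ : Set K, Disjoint C₁ C₂ → IsClosed C₁ → IsClosed C₂ →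
      lam C₁ + lam C₂ ≤ lam (C₁ ∪ C₂) := by
    intro C₁ C₂ hdis h₁ h₂
    refine le_csInf (hne _) ?_
    rintro r ⟨g, hg, hg1, rfl⟩
    obtain ⟨u, hu0, hu1, huI⟩ := exists_continuous_zero_one_of_isClosed h₂ h₁ hdis.symm
    have hA : lam C₁ ≤ φ (g * u) := by
      refine lam_le _ _ ⟨g * u, fun z => by
        simpa using mul_nonneg (hg z) (huI z).1, ?_, rfl⟩
      intro z hz
      have : u z = 1 := hu1 hz
      simp [this]
      exact hg1 z (Or.inl hz)
    have hB : lam C₂ ≤ φ (g * (1 - u)) := by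
      refine lam_le _ _ ⟨g * (1 - u), fun z => by
        simpa using mul_nonneg (hg z) (by linarith [(huI z).2]), ?_, rfl⟩
      intro z hz
      have : u z = 0 := hu0 hz
      simp [this]
      exact hg1 z (Or.inr hz)
    have : φ (g * u) + φ (g * (1 - u)) = φ g := by
      rw [← map_add]
      congr 1
      ext z
      simp only [ContinuousMap.add_apply, ContinuousMap.mul_apply, ContinuousMap.sub_apply,
        ContinuousMap.one_apply]
      ring
    linarith
  -- the content
  set Λ : Content K :=
    { toFun := fun C => Real.toNNReal (lam C)
      mono' := fun C₁ C₂ h => Real.toNNReal_le_toNNReal (lam_mono _ _ h)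
      sup_disjoint' := by
        intro C₁ C₂ hdis hc₁ hc₂
        have h1 : lam ((C₁ ⊔ C₂ : Compacts K) : Set K) = lam C₁ + lam C₂ :=
          le_antisymm (lam_union_le _ _) (lam_disj _ _ hdis hc₁ hc₂)
        simp only [h1]
        rw [Real.toNNReal_add (lam_nonneg _) (lam_nonneg _)]
      sup_le' := by
        intro C₁ C₂
        refine le_trans (Real.toNNReal_le_toNNReal (lam_union_le _ _)) ?_
        rw [Real.toNNReal_add (lam_nonneg _) (lam_nonneg _)] } with hΛ
  have hΛap : ∀ C : Compacts K, Λ.toFun C = Real.toNNReal (lam C) := fun C => rfl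
  set μ : Measure K := Λ.measure with hμ
  have hreg : μ.Regular := Λ.regular
  -- total mass 1
  have lam_univ : lam (Set.univ : Set K) = 1 := by
    refine le_antisymm (lam_le_one _) (le_csInf (hne _) ?_)
    rintro r ⟨g, hg, hg1, rfl⟩
    calc (1 : ℝ) = φ 1 := hone.symm
    _ ≤ φ g := hmono _ _ fun z => by simpa using hg1 z trivial
  have hμuniv : μ Set.univ = 1 := by
    rw [hμ, Λ.measure_apply MeasurableSet.univ,
      Λ.outerMeasure_of_isOpen Set.univ isOpen_univ]
    have : Λ.innerContent ⟨Set.univ, isOpen_univ⟩ = Λ ⟨Set.univ, isCompact_univ⟩ := by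
      refine le_antisymm ?_ (Λ.le_innerContent _ _ (Set.subset_univ _))
      exact iSup₂_le fun C hC => Λ.mono C ⟨Set.univ, isCompact_univ⟩ (Set.subset_univ _)
    rw [this, content_apply_eq_coe_toFun, hΛap]
    show ((Real.toNNReal (lam Set.univ) : ℝ≥0) : ℝ≥0∞) = 1
    rw [lam_univ]
    simp
  have hprob : IsProbabilityMeasure μ := ⟨hμuniv⟩
  refine ⟨μ, hreg, hprob, ?_⟩
  -- the key inequality
  intro g hg
  have hgint : ∀ h : C(K, ℝ), Integrable (fun z => h z) μ := by
    intro h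
    refine (map_continuous h).integrable_of_hasCompactSupport ?_
    exact IsCompact.of_isClosed_subset isCompact_univ (isClosed_tsupport _) (Set.subset_univ _)
  refine le_of_forall_pos_le_add ?_
  intro ε hε
  -- the slices
  set m : ℕ → C(K, ℝ) := fun i =>
    ⟨fun z => min (g z) (i * ε), (map_continuous g).min continuous_const⟩ with hm
  set gi : ℕ → C(K, ℝ) := fun i => m (i + 1) - m i with hgi
  set Ci : ℕ → Set K := fun i => {z | (i : ℝ) * ε ≤ g z} with hCi
  have hCic : ∀ i, IsClosed (Ci i) := fun i =>
    isClosed_le continuous_const (map_continuous g)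
  have hCicpt : ∀ i, IsCompact (Ci i) := fun i => (hCic i).isCompact
  obtain ⟨N, hN⟩ := exists_nat_ge (‖g‖ / ε)
  have hNg : ∀ z, g z ≤ N * ε := by
    intro z
    have h1 : g z ≤ ‖g‖ := le_trans (le_abs_self _) (g.norm_coe_le_norm z)
    have h2 : ‖g‖ ≤ N * ε := by
      rw [div_le_iff₀ hε] at hN; linarith
    linarith
  have hsum : ∀ z, ∑ i ∈ Finset.range N, gi i z = g z := by
    intro z
    have : ∀ i, gi i z = m (i + 1) z - m i z := fun i => rfl
    simp only [this]
    rw [Finset.sum_range_sub (fun i => m i z)]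
    have h1 : m N z = g z := by
      simp only [hm, ContinuousMap.coe_mk]
      exact min_eq_left (hNg z)
    have h2 : m 0 z = 0 := by
      simp only [hm, ContinuousMap.coe_mk]
      simp [min_eq_right (hg z)]
    rw [h1, h2, sub_zero]
  have hsumC : ∑ i ∈ Finset.range N, gi i = g := by
    ext z; rw [← hsum z]; simp
  have hgi_nonneg : ∀ i z, 0 ≤ gi i z := by
    intro i z
    simp only [hgi, ContinuousMap.sub_apply, hm, ContinuousMap.coe_mk, sub_nonneg]
    exact min_le_min (le_refl _) (by push_cast; nlinarith [hε.le])
  have hgi_le : ∀ i z, gi i z ≤ ε := by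
    intro i z
    simp only [hgi, ContinuousMap.sub_apply, hm, ContinuousMap.coe_mk]
    rcases le_total (g z) ((i : ℝ) * ε) with h | h
    · rw [min_eq_left (le_trans h (by push_cast; nlinarith [hε.le])), min_eq_left h]
      linarith
    · rw [min_eq_right h]
      have : min (g z) ((i + 1 : ℕ) * ε) ≤ ((i + 1 : ℕ) : ℝ) * ε := min_le_right _ _
      push_cast at this ⊢
      linarith
  have hgi_zero : ∀ (i : ℕ) (z : K), g z < (i : ℝ) * ε → gi i z = 0 := by
    intro i z hz
    simp only [hgi, ContinuousMap.sub_apply, hm, ContinuousMap.coe_mk]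
    rw [min_eq_left hz.le, min_eq_left (le_trans hz.le (by push_cast; nlinarith [hε.le]))]
    ring
  have hgi_eq : ∀ (i : ℕ) (z : K), z ∈ Ci (i + 1) → gi i z = ε := by
    intro i z hz
    simp only [hCi, Set.mem_setOf_eq] at hz
    push_cast at hz
    simp only [hgi, ContinuousMap.sub_apply, hm, ContinuousMap.coe_mk]
    rw [min_eq_right (by push_cast; linarith), min_eq_right (by push_cast; linarith)]
    push_cast; ring
  -- bound φ (gi i) by ε * μ (Ci i)
  have bound1 : ∀ i, φ (gi i) ≤ ε * (μ (Ci i)).toReal := by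
    intro i
    have sub1 : φ (gi i) ≤ ε * lam (Ci i) := by
      have key : ∀ r ∈ S (Ci i), φ (gi i) ≤ ε * r := by
        rintro r ⟨g', hg', hg'1, rfl⟩
        have hle : ∀ z, gi i z ≤ (ε • g') z := by
          intro z
          simp only [ContinuousMap.smul_apply, smul_eq_mul]
          rcases lt_or_ge (g z) ((i : ℝ) * ε) with h | h
          · rw [hgi_zero i z h]
            exact mul_nonneg hε.le (hg' z)
          · calc gi i z ≤ ε := hgi_le i z
            _ = ε * 1 := by ring
            _ ≤ ε * g' z := by
                have := hg'1 z h
                nlinarith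
        calc φ (gi i) ≤ φ (ε • g') := hmono _ _ hle
        _ = ε * φ g' := by rw [ContinuousLinearMap.map_smul]; simp
      have h2 : φ (gi i) / ε ≤ lam (Ci i) :=
        le_csInf (hne _) fun r hr => (div_le_iff₀' hε).mpr (key r hr)
      calc φ (gi i) = ε * (φ (gi i) / ε) := by field_simp
      _ ≤ ε * lam (Ci i) := by nlinarith [lam_nonneg (Ci i)]
    have sub2 : lam (Ci i) ≤ (μ (Ci i)).toReal := by
      have h1 : (Λ ⟨Ci i, hCicpt i⟩ : ℝ≥0∞) ≤ μ (Ci i) := by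
        rw [hμ, Λ.measure_apply (hCic i).measurableSet]
        exact Λ.le_outerMeasure_compacts _
      have h2 : μ (Ci i) ≠ ⊤ := measure_ne_top μ _
      have h3 := ENNReal.toReal_mono h2 h1
      rwa [content_apply_eq_coe_toFun, hΛap, ENNReal.coe_toReal,
        Real.coe_toNNReal _ (lam_nonneg _)] at h3
    calc φ (gi i) ≤ ε * lam (Ci i) := sub1
    _ ≤ ε * (μ (Ci i)).toReal := by nlinarith
  -- bound ε * μ (Ci (i+1)) by the integral of gi i
  have bound2 : ∀ i, ε * (μ (Ci (i + 1))).toReal ≤ ∫ z, gi i z ∂μ := by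
    intro i
    have h1 : ∫ z in Ci (i + 1), gi i z ∂μ = ε * (μ (Ci (i + 1))).toReal := by
      rw [setIntegral_congr_fun (hCic (i + 1)).measurableSet
        (fun z hz => hgi_eq i z hz)]
      rw [setIntegral_const]
      simp [mul_comm, measureReal_def]
    rw [← h1]
    exact setIntegral_le_integral (hgint _) (Filter.Eventually.of_forall (hgi_nonneg i))
  -- put everything together
  have step1 : φ g = ∑ i ∈ Finset.range N, φ (gi i) := by
    rw [← hsumC, map_sum]
  have step2 : ∑ i ∈ Finset.range N, (μ (Ci i)).toReal ≤
      1 + ∑ i ∈ Finset.range N, (μ (Ci (i + 1))).toReal := by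
    cases N with
    | zero => simp
    | succ n =>
      rw [Finset.sum_range_succ' (fun i => (μ (Ci i)).toReal) n]
      have h1 : (μ (Ci 0)).toReal ≤ 1 := by
        have := prob_le_one (μ := μ) (s := Ci 0)
        have h2 : μ (Ci 0) ≠ ⊤ := measure_ne_top μ _
        calc (μ (Ci 0)).toReal ≤ (1 : ℝ≥0∞).toReal :=
          ENNReal.toReal_mono (by simp) this
        _ = 1 := by simp
      have h2 : ∑ i ∈ Finset.range n, (μ (Ci (i + 1))).toReal ≤
          ∑ i ∈ Finset.range (n + 1), (μ (Ci (i + 1))).toReal := by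
        refine Finset.sum_le_sum_of_subset_of_nonneg ?_ ?_
        · exact Finset.range_subset_range.mpr (Nat.le_succ n)
        · intro i _ _; positivity
      linarith
  have step3 : ∑ i ∈ Finset.range N, ∫ z, gi i z ∂μ = ∫ z, g z ∂μ := by
    rw [← integral_finset_sum _ (fun i _ => hgint (gi i))]
    congr 1
    ext z
    rw [hsum z]
  calc φ g = ∑ i ∈ Finset.range N, φ (gi i) := step1
  _ ≤ ∑ i ∈ Finset.range N, ε * (μ (Ci i)).toReal :=
      Finset.sum_le_sum fun i _ => bound1 i
  _ = ε * ∑ i ∈ Finset.range N, (μ (Ci i)).toReal := by rw [Finset.mul_sum]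
  _ ≤ ε * (1 + ∑ i ∈ Finset.range N, (μ (Ci (i + 1))).toReal) := by nlinarith [step2]
  _ = ε + ∑ i ∈ Finset.range N, ε * (μ (Ci (i + 1))).toReal := by
      rw [mul_add, mul_one, Finset.mul_sum]
  _ ≤ ε + ∑ i ∈ Finset.range N, ∫ z, gi i z ∂μ := by
      have := Finset.sum_le_sum fun i (_ : i ∈ Finset.range N) => bound2 i
      linarith
  _ = ∫ z, g z ∂μ + ε := by rw [step3]; ring

end RMK

section main

/-- The Farmer–Johnson domination theorem: a map `T : X → Y` between metric spaces is
Lipschitz `p`-summing if and only if it satisfies a Pietsch-type domination by a regular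
Borel probability measure on the unit ball of the Lipschitz dual of `X`. -/
theorem lipschitz_summing_domination
    {X Y : Type*} [MetricSpace X] [MetricSpace Y] (x₀ : X)
    (p : ℝ) (hp : 0 < p) (T : X → Y) :
    (∃ C₁ > 0, ∀ (m : ℕ) (x y : Fin m → X) (a : Fin m → ℝ), (∀ j, 0 ≤ a j) →
        ∑ j, a j * dist (T (x j)) (T (y j)) ^ p ≤
          C₁ * ⨆ f : lipDualBall X x₀,
            ∑ j, a j * |(f : X → ℝ) (x j) - (f : X → ℝ) (y j)| ^ p) ↔
    (∃ C > 0, ∃ μ : Measure (lipDualBall X x₀), μ.Regular ∧ IsProbabilityMeasure μ ∧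
        ∀ x y : X, dist (T x) (T y) ≤
          C * (∫ f, |(f : X → ℝ) x - (f : X → ℝ) y| ^ p ∂μ) ^ (1 / p)) := by
  haveI : CompactSpace (lipDualBall X x₀) := lipDualBall_compactSpace x₀
  haveI : Nonempty (lipDualBall X x₀) := lipDualBall_nonempty x₀
  have hGc : ∀ x y : X,
      Continuous fun f : lipDualBall X x₀ => |(f : X → ℝ) x - (f : X → ℝ) y| ^ p :=
    fun x y => ((continuous_eval_lipDualBall x).sub
      (continuous_eval_lipDualBall y)).abs.rpow_const fun f => Or.inr hp.le
  set G : X → X → C(lipDualBall X x₀, ℝ) := fun x y => ⟨_, hGc x y⟩ with hG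
  have hGnn : ∀ (x y : X) (f : lipDualBall X x₀), 0 ≤ G x y f :=
    fun x y f => Real.rpow_nonneg (abs_nonneg _) p
  have hintegr : ∀ (μ : Measure (lipDualBall X x₀)) [IsProbabilityMeasure μ] (x y : X),
      Integrable (fun f : lipDualBall X x₀ =>
        |(f : X → ℝ) x - (f : X → ℝ) y| ^ p) μ := by
    intro μ _ x y
    refine (hGc x y).integrable_of_hasCompactSupport ?_
    exact IsCompact.of_isClosed_subset isCompact_univ (isClosed_tsupport _) (Set.subset_univ _)
  constructor
  · -- forward: summing → domination
    rintro ⟨C₁, hC₁, hsum⟩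
    set B : X → X → C(lipDualBall X x₀, ℝ) := fun x y =>
      C₁ • G x y - ContinuousMap.const _ (dist (T x) (T y) ^ p) with hB
    have hBapp : ∀ (x y : X) (f : lipDualBall X x₀),
        B x y f = C₁ * |(f : X → ℝ) x - (f : X → ℝ) y| ^ p - dist (T x) (T y) ^ p := by
      intro x y f
      simp [hB, hG]
    set F : Set C(lipDualBall X x₀, ℝ) :=
      {h | ∃ (m : ℕ) (x y : Fin m → X) (a : Fin m → ℝ),
        (∀ j, 0 ≤ a j) ∧ h = ∑ j, a j • B (x j) (y j)} with hF
    set Nset : Set C(lipDualBall X x₀, ℝ) := {h | ∀ f, h f < 0} with hNs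
    -- N is open
    have hNopen : IsOpen Nset := by
      rw [Metric.isOpen_iff]
      intro h hh
      obtain ⟨f₀, -, hf₀⟩ := isCompact_univ.exists_isMaxOn Set.univ_nonempty
        (map_continuous h).continuousOn
      refine ⟨-(h f₀), by simpa using hh f₀, ?_⟩
      intro h' hh' f
      have h1 : h' f - h f ≤ ‖h' - h‖ :=
        le_trans (le_abs_self _) ((h' - h).norm_coe_le_norm f)
      have h2 : ‖h' - h‖ < -(h f₀) := by rwa [Metric.mem_ball, dist_eq_norm] at hh'
      have h3 : h f ≤ h f₀ := hf₀ (Set.mem_univ f)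
      linarith
    -- N is convex
    have hNconv : Convex ℝ Nset := by
      intro h₁ hh₁ h₂ hh₂ s t hs ht hst
      intro f
      have e : (s • h₁ + t • h₂) f = s * h₁ f + t * h₂ f := by simp
      rw [e]
      rcases eq_or_lt_of_le hs with rfl | hs'
      · simp only [zero_add] at hst
        subst hst
        simpa using hh₂ f
      · nlinarith [hh₁ f, hh₂ f, mul_nonpos_of_nonneg_of_nonpos ht (hh₂ f).le]
    -- F is convex
    have hFconv : Convex ℝ F := by
      rintro h₁ ⟨m, x, y, a, ha, rfl⟩ h₂ ⟨m', x', y', a', ha', rfl⟩ s t hs ht hst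
      refine ⟨m + m', Fin.append x x', Fin.append y y', Fin.append (s • a) (t • a'), ?_, ?_⟩
      · intro j
        refine Fin.addCases (fun i => ?_) (fun i => ?_) j
        · simp only [Fin.append_left, Pi.smul_apply, smul_eq_mul]
          exact mul_nonneg hs (ha i)
        · simp only [Fin.append_right, Pi.smul_apply, smul_eq_mul]
          exact mul_nonneg ht (ha' i)
      · rw [Fin.sum_univ_add]
        simp only [Fin.append_left, Fin.append_right, Pi.smul_apply, smul_eq_mul]
        rw [Finset.smul_sum, Finset.smul_sum]
        congr 1 <;> exact Finset.sum_congr rfl fun i _ => by rw [smul_smul]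
    -- F and N are disjoint
    have hdisj : Disjoint Nset F := by
      rw [Set.disjoint_left]
      rintro h hhN ⟨m, x, y, a, ha, rfl⟩
      obtain ⟨f₀, -, hf₀⟩ := isCompact_univ.exists_isMaxOn Set.univ_nonempty
        (continuous_finset_sum Finset.univ fun j _ =>
          continuous_const.mul (hGc (x j) (y j))).continuousOn
      have hsup : (⨆ f : lipDualBall X x₀,
          ∑ j, a j * |(f : X → ℝ) (x j) - (f : X → ℝ) (y j)| ^ p) ≤
          ∑ j, a j * |(f₀ : X → ℝ) (x j) - (f₀ : X → ℝ) (y j)| ^ p :=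
        ciSup_le fun f => hf₀ (Set.mem_univ f)
      have hkey := hsum m x y a ha
      have h1 : ∑ j, a j * dist (T (x j)) (T (y j)) ^ p ≤
          C₁ * ∑ j, a j * |(f₀ : X → ℝ) (x j) - (f₀ : X → ℝ) (y j)| ^ p :=
        le_trans hkey (mul_le_mul_of_nonneg_left hsup hC₁.le)
      have h2 : (∑ j, a j • B (x j) (y j)) f₀ =
          C₁ * ∑ j, a j * |(f₀ : X → ℝ) (x j) - (f₀ : X → ℝ) (y j)| ^ p -
            ∑ j, a j * dist (T (x j)) (T (y j)) ^ p := by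
        rw [ContinuousMap.coe_sum, Finset.sum_apply]
        simp only [ContinuousMap.coe_smul, Pi.smul_apply, smul_eq_mul]
        rw [Finset.mul_sum, ← Finset.sum_sub_distrib]
        refine Finset.sum_congr rfl fun j _ => ?_
        rw [hBapp]
        ring
      have h3 := hhN f₀
      rw [h2] at h3
      linarith
    obtain ⟨φ, u, hNlt, hFge⟩ := geometric_hahn_banach_open hNconv hNopen hFconv hdisj
    have h0F : (0 : C(lipDualBall X x₀, ℝ)) ∈ F := by
      refine ⟨0, Fin.elim0, Fin.elim0, Fin.elim0, fun j => j.elim0, ?_⟩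
      simp
    have hu0 : u ≤ 0 := by simpa using hFge 0 h0F
    have hφ1 : 0 < φ 1 := by
      have h1 : (-1 : C(lipDualBall X x₀, ℝ)) ∈ Nset := fun f => by simp
      have := hNlt _ h1
      rw [map_neg] at this
      linarith
    have hφpos : ∀ g : C(lipDualBall X x₀, ℝ), (∀ z, 0 ≤ g z) → 0 ≤ φ g := by
      intro g hg
      by_contra hcon
      push_neg at hcon
      set c : ℝ := -φ g / (2 * φ 1) with hc
      have hcpos : 0 < c := div_pos (by linarith) (by linarith)
      have hmem : -g - c • 1 ∈ Nset := by
        intro f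
        simp only [ContinuousMap.sub_apply, ContinuousMap.neg_apply,
          ContinuousMap.smul_apply, ContinuousMap.one_apply, smul_eq_mul, mul_one]
        have := hg f
        linarith
      have := hNlt _ hmem
      rw [map_sub, map_neg, _root_.map_smul] at this
      simp only [smul_eq_mul] at this
      have hcφ : c * φ 1 = -φ g / 2 := by
        rw [hc]; field_simp
      rw [hcφ] at this
      linarith
    have hφF : ∀ h ∈ F, 0 ≤ φ h := by
      rintro h hhF
      by_contra hcon
      push_neg at hcon
      obtain ⟨m, x, y, a, ha, rfl⟩ := hhF
      set t : ℝ := (u - 1) / φ (∑ j, a j • B (x j) (y j)) with ht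
      have htpos : 0 < t := div_pos_of_neg_of_neg (by linarith) hcon
      have hmem : t • (∑ j, a j • B (x j) (y j)) ∈ F := by
        refine ⟨m, x, y, t • a, fun j => mul_nonneg htpos.le (ha j), ?_⟩
        rw [Finset.smul_sum]
        exact Finset.sum_congr rfl fun j _ => by
          simp [smul_smul]
      have h1 := hFge _ hmem
      rw [_root_.map_smul, smul_eq_mul, ht, div_mul_cancel₀ _ (ne_of_lt hcon)] at h1
      linarith
    have pietsch : ∀ x y : X, dist (T x) (T y) ^ p * φ 1 ≤ C₁ * φ (G x y) := by
      intro x y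
      have hmem : B x y ∈ F := by
        refine ⟨1, fun _ => x, fun _ => y, fun _ => 1, fun _ => zero_le_one, ?_⟩
        simp
      have h1 := hφF _ hmem
      have e : φ (B x y) = C₁ * φ (G x y) - dist (T x) (T y) ^ p * φ 1 := by
        have eB : B x y = C₁ • G x y -
            (dist (T x) (T y) ^ p) • (1 : C(lipDualBall X x₀, ℝ)) := by
          ext f
          rw [hBapp x y f]
          simp [hG]
        rw [eB, map_sub, _root_.map_smul, _root_.map_smul, smul_eq_mul, smul_eq_mul]
      linarith
    set ψ : C(lipDualBall X x₀, ℝ) →L[ℝ] ℝ := (φ 1)⁻¹ • φ with hψ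
    have hψpos : ∀ g : C(lipDualBall X x₀, ℝ), (∀ z, 0 ≤ g z) → 0 ≤ ψ g := by
      intro g hg
      simp only [hψ, ContinuousLinearMap.smul_apply, smul_eq_mul]
      exact mul_nonneg (inv_nonneg.mpr hφ1.le) (hφpos g hg)
    have hψ1 : ψ 1 = 1 := by
      simp only [hψ, ContinuousLinearMap.smul_apply, smul_eq_mul]
      exact inv_mul_cancel₀ hφ1.ne'
    obtain ⟨μ, hreg, hprob, hint⟩ := exists_rep_measure ψ hψpos hψ1
    refine ⟨C₁ ^ (1 / p), Real.rpow_pos_of_pos hC₁ _, μ, hreg, hprob, ?_⟩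
    intro x y
    haveI := hprob
    set I : ℝ := ∫ f, |(f : X → ℝ) x - (f : X → ℝ) y| ^ p ∂μ with hI
    have hI0 : 0 ≤ I := integral_nonneg fun f => Real.rpow_nonneg (abs_nonneg _) p
    have h2 : ψ (G x y) ≤ I := hint (G x y) (hGnn x y)
    have h3 : dist (T x) (T y) ^ p ≤ C₁ * I := by
      have h4 : ψ (G x y) = φ (G x y) / φ 1 := by
        simp only [hψ, ContinuousLinearMap.smul_apply, smul_eq_mul]
        rw [inv_mul_eq_div]
      have h5 := pietsch x y
      have h6 : dist (T x) (T y) ^ p ≤ C₁ * ψ (G x y) := by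
        rw [h4, mul_div_assoc', le_div_iff₀ hφ1]
        linarith
      nlinarith
    calc dist (T x) (T y) = (dist (T x) (T y) ^ p) ^ (1 / p) := by
          rw [← Real.rpow_mul dist_nonneg, mul_one_div_cancel hp.ne', Real.rpow_one]
    _ ≤ (C₁ * I) ^ (1 / p) :=
        Real.rpow_le_rpow (Real.rpow_nonneg dist_nonneg p) h3 (by positivity)
    _ = C₁ ^ (1 / p) * I ^ (1 / p) := Real.mul_rpow hC₁.le hI0
  · -- backward: domination → summing
    rintro ⟨C, hC, μ, hreg, hprob, hdom⟩
    haveI := hprob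
    refine ⟨C ^ p, Real.rpow_pos_of_pos hC p, ?_⟩
    intro m x y a ha
    have hj : ∀ j : Fin m, dist (T (x j)) (T (y j)) ^ p ≤
        C ^ p * ∫ f, |(f : X → ℝ) (x j) - (f : X → ℝ) (y j)| ^ p ∂μ := by
      intro j
      set I : ℝ := ∫ f, |(f : X → ℝ) (x j) - (f : X → ℝ) (y j)| ^ p ∂μ with hI
      have hI0 : 0 ≤ I := integral_nonneg fun f => Real.rpow_nonneg (abs_nonneg _) p
      calc dist (T (x j)) (T (y j)) ^ p ≤ (C * I ^ (1 / p)) ^ p :=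
            Real.rpow_le_rpow dist_nonneg (hdom (x j) (y j)) hp.le
      _ = C ^ p * (I ^ (1 / p)) ^ p :=
            Real.mul_rpow hC.le (Real.rpow_nonneg hI0 _)
      _ = C ^ p * I := by
            rw [← Real.rpow_mul hI0, one_div_mul_cancel hp.ne', Real.rpow_one]
    set S : lipDualBall X x₀ → ℝ := fun f =>
      ∑ j, a j * |(f : X → ℝ) (x j) - (f : X → ℝ) (y j)| ^ p with hSdef
    have hSint : Integrable S μ := by
      refine integrable_finset_sum _ fun j _ => ?_
      exact (hintegr μ (x j) (y j)).const_mul (a j)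
    have hSbdd : BddAbove (Set.range S) := by
      refine ⟨∑ j, a j * dist (x j) (y j) ^ p, ?_⟩
      rintro r ⟨f, rfl⟩
      refine Finset.sum_le_sum fun j _ => ?_
      refine mul_le_mul_of_nonneg_left ?_ (ha j)
      exact Real.rpow_le_rpow (abs_nonneg _) (lipDualBall_abs_sub_le f (x j) (y j)) hp.le
    have hmain : ∫ f, S f ∂μ ≤ ⨆ f : lipDualBall X x₀, S f := by
      calc ∫ f, S f ∂μ ≤ ∫ _, (⨆ f : lipDualBall X x₀, S f) ∂μ :=
            integral_mono hSint (integrable_const _) fun f => le_ciSup hSbdd f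
      _ = ⨆ f : lipDualBall X x₀, S f := by simp
    calc ∑ j, a j * dist (T (x j)) (T (y j)) ^ p
        ≤ ∑ j, a j * (C ^ p * ∫ f, |(f : X → ℝ) (x j) - (f : X → ℝ) (y j)| ^ p ∂μ) :=
          Finset.sum_le_sum fun j _ => mul_le_mul_of_nonneg_left (hj j) (ha j)
    _ = C ^ p * ∑ j, a j * ∫ f, |(f : X → ℝ) (x j) - (f : X → ℝ) (y j)| ^ p ∂μ := by
          rw [Finset.mul_sum]
          exact Finset.sum_congr rfl fun j _ => by ring
    _ = C ^ p * ∫ f, S f ∂μ := by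
          congr 1
          rw [hSdef]
          rw [integral_finset_sum _ fun j _ => (hintegr μ (x j) (y j)).const_mul (a j)]
          exact Finset.sum_congr rfl fun j _ => (integral_const_mul _ _).symm
    _ ≤ C ^ p * ⨆ f : lipDualBall X x₀, S f := by
          have := Real.rpow_pos_of_pos hC p
          nlinarith [hmain]

end main
end

section
/- Let n ∈ ℕ, let X₁,…,X_n and Y be Banach spaces over 𝕂, let 0 < p < ∞, and let T : X₁ × ⋯ × X_n → Y be a continuous n-linear mapping. Then T is strongly p-summing, i.e. there is a constant C₁ > 0 such that ∑_{j=1}^m ‖T(x_j¹,…,x_jⁿ)‖^p ≤ C₁ · sup_{B ∈ 𝔅} ∑_{j=1}^m |B(x_j¹,…,x_jⁿ)|^p for all m ∈ ℕ and all tuples (x_j¹,…,x_jⁿ), if and only if there exist a constant C > 0 and a regular Borel probability measure μ on 𝔅 equipped with the topology of pointwise convergence such that ‖T(x₁,…,x_n)‖ ≤ C · (∫_𝔅 |B(x₁,…,x_n)|^p dμ(B))^{1/p} for all (x₁,…,x_n) ∈ X₁ × ⋯ × X_n. -/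
open MeasureTheory

/-- The closed unit ball of the space of continuous `n`-linear forms on `X₁ × ⋯ × Xₙ`,
realized as a set of functions `(Π i, X i) → 𝕜` and thus equipped with the topology of
pointwise convergence. -/
def multilinearFormBall (𝕜 : Type*) {n : ℕ} (X : Fin n → Type*) [RCLike 𝕜]
    [∀ i, NormedAddCommGroup (X i)] [∀ i, NormedSpace 𝕜 (X i)] : Set ((Π i, X i) → 𝕜) :=
  {B | ∃ A : ContinuousMultilinearMap 𝕜 X 𝕜, ‖A‖ ≤ 1 ∧ B = ⇑A}

noncomputable instance (𝕜 : Type*) {n : ℕ} (X : Fin n → Type*) [RCLike 𝕜]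
    [∀ i, NormedAddCommGroup (X i)] [∀ i, NormedSpace 𝕜 (X i)] :
    MeasurableSpace (multilinearFormBall 𝕜 X) := borel _

instance (𝕜 : Type*) {n : ℕ} (X : Fin n → Type*) [RCLike 𝕜]
    [∀ i, NormedAddCommGroup (X i)] [∀ i, NormedSpace 𝕜 (X i)] :
    BorelSpace (multilinearFormBall 𝕜 X) := ⟨rfl⟩


open MeasureTheory

section Basics

variable {𝕜 : Type*} [RCLike 𝕜] {n : ℕ} {X : Fin n → Type*}
  [∀ i, NormedAddCommGroup (X i)] [∀ i, NormedSpace 𝕜 (X i)]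

lemma mfb_zero_mem : (0 : (Π i, X i) → 𝕜) ∈ multilinearFormBall 𝕜 X :=
  ⟨0, by simp, by ext x; simp⟩

instance : Nonempty (multilinearFormBall 𝕜 X) := ⟨⟨0, mfb_zero_mem⟩⟩

lemma mfb_norm_le {f : (Π i, X i) → 𝕜} (hf : f ∈ multilinearFormBall 𝕜 X) (x : Π i, X i) :
    ‖f x‖ ≤ ∏ i, ‖x i‖ := by
  obtain ⟨A, hA, rfl⟩ := hf
  calc ‖A x‖ ≤ ‖A‖ * ∏ i, ‖x i‖ := A.le_opNorm x
  _ ≤ 1 * ∏ i, ‖x i‖ := by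
      apply mul_le_mul_of_nonneg_right hA (Finset.prod_nonneg fun i _ => norm_nonneg _)
  _ = ∏ i, ‖x i‖ := one_mul _

lemma mfb_isClosed : IsClosed (multilinearFormBall 𝕜 X) := by
  classical
  have : multilinearFormBall 𝕜 X =
      {f : (Π i, X i) → 𝕜 | ∀ (x : Π i, X i) (i : Fin n) (a b : X i),
          f (Function.update x i (a + b)) = f (Function.update x i a) + f (Function.update x i b)}
      ∩ {f | ∀ (x : Π i, X i) (i : Fin n) (c : 𝕜) (a : X i),
          f (Function.update x i (c • a)) = c • f (Function.update x i a)}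
      ∩ {f | ∀ x : Π i, X i, ‖f x‖ ≤ ∏ i, ‖x i‖} := by
    ext f
    constructor
    · rintro ⟨A, hA, rfl⟩
      refine ⟨⟨fun x i a b => A.map_update_add x i a b, fun x i c a => A.map_update_smul x i c a⟩,
        fun x => mfb_norm_le ⟨A, hA, rfl⟩ x⟩
    · rintro ⟨⟨h1, h2⟩, h3⟩
      set A0 : MultilinearMap 𝕜 X 𝕜 :=
        { toFun := f
          map_update_add' := fun {inst} x i a b => by
            rw [Subsingleton.elim inst (instDecidableEqFin n)]; exact h1 x i a b
          map_update_smul' := fun {inst} x i c a => by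
            rw [Subsingleton.elim inst (instDecidableEqFin n)]; exact h2 x i c a }
      refine ⟨A0.mkContinuous 1 (fun x => by show ‖f x‖ ≤ 1 * ∏ i, ‖x i‖; simpa using h3 x),
        MultilinearMap.mkContinuous_norm_le _ zero_le_one _, rfl⟩
  rw [this]
  refine IsClosed.inter (IsClosed.inter ?_ ?_) ?_
  · have : {f : (Π i, X i) → 𝕜 | ∀ (x : Π i, X i) (i : Fin n) (a b : X i),
        f (Function.update x i (a + b)) = f (Function.update x i a) + f (Function.update x i b)} =
        ⋂ (x : Π i, X i) (i : Fin n) (a : X i) (b : X i),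
          {f : (Π i, X i) → 𝕜 | f (Function.update x i (a + b)) =
            f (Function.update x i a) + f (Function.update x i b)} := by
      ext f; simp [Set.mem_iInter]
    rw [this]
    exact isClosed_iInter fun x => isClosed_iInter fun i => isClosed_iInter fun a =>
      isClosed_iInter fun b => isClosed_eq (continuous_apply _)
        ((continuous_apply (Function.update x i a)).add (continuous_apply (Function.update x i b)))
  · have : {f : (Π i, X i) → 𝕜 | ∀ (x : Π i, X i) (i : Fin n) (c : 𝕜) (a : X i),
        f (Function.update x i (c • a)) = c • f (Function.update x i a)} =
        ⋂ (x : Π i, X i) (i : Fin n) (c : 𝕜) (a : X i),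
          {f : (Π i, X i) → 𝕜 | f (Function.update x i (c • a)) =
            c • f (Function.update x i a)} := by
      ext f; simp [Set.mem_iInter]
    rw [this]
    exact isClosed_iInter fun x => isClosed_iInter fun i => isClosed_iInter fun c =>
      isClosed_iInter fun a => isClosed_eq (continuous_apply _)
        ((continuous_apply (Function.update x i a)).const_smul c)
  · have : {f : (Π i, X i) → 𝕜 | ∀ x : Π i, X i, ‖f x‖ ≤ ∏ i, ‖x i‖} =
        ⋂ (x : Π i, X i), {f : (Π i, X i) → 𝕜 | ‖f x‖ ≤ ∏ i, ‖x i‖} := by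
      ext f; simp [Set.mem_iInter]
    rw [this]
    exact isClosed_iInter fun x => isClosed_le ((continuous_apply x).norm) continuous_const

lemma mfb_isCompact : IsCompact (multilinearFormBall 𝕜 X) := by
  have hsub : multilinearFormBall 𝕜 X ⊆
      {f : (Π i, X i) → 𝕜 | ∀ x, f x ∈ Metric.closedBall (0 : 𝕜) (∏ i, ‖x i‖)} := by
    intro f hf x
    simpa [Metric.mem_closedBall, dist_eq_norm] using mfb_norm_le hf x
  exact IsCompact.of_isClosed_subset
    (isCompact_pi_infinite fun x => isCompact_closedBall _ _) mfb_isClosed hsub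

instance : CompactSpace (multilinearFormBall 𝕜 X) :=
  isCompact_iff_compactSpace.mp mfb_isCompact

end Basics

set_option linter.unusedSectionVars false

section Part2
variable {𝕜 : Type*} [RCLike 𝕜] {n : ℕ} {X : Fin n → Type*}
  [∀ i, NormedAddCommGroup (X i)] [∀ i, NormedSpace 𝕜 (X i)]

noncomputable def mfbSup (f : C(multilinearFormBall 𝕜 X, ℝ)) : ℝ := ⨆ B, f B

lemma mfbSup_bddAbove (f : C(multilinearFormBall 𝕜 X, ℝ)) : BddAbove (Set.range f) :=
  (isCompact_range f.continuous).bddAbove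

lemma le_mfbSup (f : C(multilinearFormBall 𝕜 X, ℝ)) (B : multilinearFormBall 𝕜 X) :
    f B ≤ mfbSup f :=
  le_ciSup (mfbSup_bddAbove f) B

lemma mfbSup_le {f : C(multilinearFormBall 𝕜 X, ℝ)} {a : ℝ} (h : ∀ B, f B ≤ a) :
    mfbSup f ≤ a := ciSup_le h

lemma mfbSup_add (f g : C(multilinearFormBall 𝕜 X, ℝ)) :
    mfbSup (f + g) ≤ mfbSup f + mfbSup g :=
  mfbSup_le fun B => add_le_add (le_mfbSup f B) (le_mfbSup g B)

lemma mfbSup_smul (c : ℝ) (hc : 0 ≤ c) (f : C(multilinearFormBall 𝕜 X, ℝ)) :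
    mfbSup (c • f) = c * mfbSup f := by
  rw [mfbSup, mfbSup, Real.mul_iSup_of_nonneg hc]
  simp

variable {Y : Type*} [NormedAddCommGroup Y] [NormedSpace 𝕜 Y]

/-- The convex cone of functions used in the Pietsch-domination argument. -/
def mfbCone (T : ContinuousMultilinearMap 𝕜 X Y) (p C₁ : ℝ) :
    Set C(multilinearFormBall 𝕜 X, ℝ) :=
  {f | ∃ (m : ℕ) (x : Fin m → Π i, X i), ∀ B : multilinearFormBall 𝕜 X,
      f B = ∑ j, (C₁ * ‖(B : (Π i, X i) → 𝕜) (x j)‖ ^ p - ‖T (x j)‖ ^ p)}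

variable {T : ContinuousMultilinearMap 𝕜 X Y} {p C₁ : ℝ}

lemma mfbCone_zero_mem : (0 : C(multilinearFormBall 𝕜 X, ℝ)) ∈ mfbCone T p C₁ :=
  ⟨0, Fin.elim0, fun B => by simp⟩

lemma mfbCone_single_mem (hp : 0 < p) (x : Π i, X i) :
    (C₁ • (⟨fun B => ‖(B : (Π i, X i) → 𝕜) x‖ ^ p, by
        exact (((continuous_apply x).comp continuous_subtype_val).norm).rpow_const
          (fun B => Or.inr hp.le)⟩ : C(multilinearFormBall 𝕜 X, ℝ))
      - (‖T x‖ ^ p) • 1) ∈ mfbCone T p C₁ := by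
  refine ⟨1, fun _ => x, fun B => ?_⟩
  simp [smul_eq_mul]

lemma mfbCone_add_mem {f g : C(multilinearFormBall 𝕜 X, ℝ)}
    (hf : f ∈ mfbCone T p C₁) (hg : g ∈ mfbCone T p C₁) : f + g ∈ mfbCone T p C₁ := by
  obtain ⟨m₁, x, hx⟩ := hf
  obtain ⟨m₂, y, hy⟩ := hg
  refine ⟨m₁ + m₂, Fin.append x y, fun B => ?_⟩
  rw [ContinuousMap.add_apply, hx B, hy B, Fin.sum_univ_add]
  simp [Fin.append_left, Fin.append_right]

lemma mfbCone_smul_mem (hn : 0 < n) (hp : 0 < p) {c : ℝ} (hc : 0 < c)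
    {f : C(multilinearFormBall 𝕜 X, ℝ)} (hf : f ∈ mfbCone T p C₁) :
    c • f ∈ mfbCone T p C₁ := by
  obtain ⟨m, x, hx⟩ := hf
  set i0 : Fin n := ⟨0, hn⟩
  set r : ℝ := c ^ p⁻¹ with hr
  have hr0 : 0 ≤ r := Real.rpow_nonneg hc.le _
  have hrp : r ^ p = c := Real.rpow_inv_rpow hc.le (ne_of_gt hp)
  refine ⟨m, fun j => Function.update (x j) i0 ((r : 𝕜) • (x j i0)), fun B => ?_⟩
  have key : ∀ (A : ContinuousMultilinearMap 𝕜 X Y) (j : Fin m),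
      ‖A (Function.update (x j) i0 ((r : 𝕜) • (x j i0)))‖ ^ p = c * ‖A (x j)‖ ^ p := by
    intro A j
    rw [A.map_update_smul, Function.update_eq_self, norm_smul]
    rw [Real.mul_rpow (norm_nonneg _) (norm_nonneg _)]
    have : ‖((r : ℝ) : 𝕜)‖ = r := by
      rw [RCLike.norm_ofReal, abs_of_nonneg hr0]
    rw [this, hrp]
  obtain ⟨A, hA, hBA⟩ := B.2
  have keyB : ∀ j : Fin m,
      ‖(B : (Π i, X i) → 𝕜) (Function.update (x j) i0 ((r : 𝕜) • (x j i0)))‖ ^ p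
        = c * ‖(B : (Π i, X i) → 𝕜) (x j)‖ ^ p := by
    intro j
    have hBA' : (B : (Π i, X i) → 𝕜) = ⇑A := hBA
    rw [hBA', A.map_update_smul, Function.update_eq_self, norm_smul,
      Real.mul_rpow (norm_nonneg _) (norm_nonneg _)]
    have : ‖((r : ℝ) : 𝕜)‖ = r := by
      rw [RCLike.norm_ofReal, abs_of_nonneg hr0]
    rw [this, hrp]
  rw [ContinuousMap.smul_apply, hx B, smul_eq_mul, Finset.mul_sum]
  refine Finset.sum_congr rfl fun j _ => ?_
  rw [keyB j, key T j]
  ring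

lemma mfbCone_sup_nonneg
    (hyp : ∀ (m : ℕ) (x : Fin m → Π i, X i),
        ∑ j, ‖T (x j)‖ ^ p ≤
          C₁ * ⨆ B : multilinearFormBall 𝕜 X, ∑ j, ‖(B : (Π i, X i) → 𝕜) (x j)‖ ^ p)
    (hC₁ : 0 < C₁)
    {f : C(multilinearFormBall 𝕜 X, ℝ)} (hf : f ∈ mfbCone T p C₁) : 0 ≤ mfbSup f := by
  obtain ⟨m, x, hx⟩ := hf
  set u : multilinearFormBall 𝕜 X → ℝ := fun B => ∑ j, ‖(B : (Π i, X i) → 𝕜) (x j)‖ ^ p with hu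
  set K : ℝ := ∑ j, ‖T (x j)‖ ^ p with hK
  have h1 : ∀ B, C₁ * u B - K ≤ mfbSup f := by
    intro B
    have := le_mfbSup f B
    rw [hx B] at this
    simpa [u, K, Finset.sum_sub_distrib, Finset.mul_sum] using this
  have h2 : C₁ * (⨆ B, u B) ≤ K + mfbSup f := by
    rw [Real.mul_iSup_of_nonneg hC₁.le]
    exact ciSup_le fun B => by linarith [h1 B]
  have h3 := hyp m x
  rw [← hK] at h3
  have : C₁ * ⨆ B : multilinearFormBall 𝕜 X, ∑ j, ‖(B : (Π i, X i) → 𝕜) (x j)‖ ^ p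
      = C₁ * ⨆ B, u B := rfl
  linarith [h3.trans_eq this, h2]

end Part2

section Part3
variable {𝕜 : Type*} [RCLike 𝕜] {n : ℕ} {X : Fin n → Type*}
  [∀ i, NormedAddCommGroup (X i)] [∀ i, NormedSpace 𝕜 (X i)]
  {Y : Type*} [NormedAddCommGroup Y] [NormedSpace 𝕜 Y]
  {T : ContinuousMultilinearMap 𝕜 X Y} {p C₁ : ℝ}

/-- The sublinear functional for the Hahn-Banach argument. -/
noncomputable def mfbN (T : ContinuousMultilinearMap 𝕜 X Y) (p C₁ : ℝ)
    (f : C(multilinearFormBall 𝕜 X, ℝ)) : ℝ :=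
  ⨅ h : mfbCone T p C₁, mfbSup (f + (h : C(multilinearFormBall 𝕜 X, ℝ)))

variable (hS : ∀ h ∈ mfbCone T p C₁, 0 ≤ mfbSup h)

instance : Nonempty (mfbCone T p C₁) := ⟨⟨0, mfbCone_zero_mem⟩⟩

include hS in
lemma mfbN_bddBelow (f : C(multilinearFormBall 𝕜 X, ℝ)) :
    BddBelow (Set.range fun h : mfbCone T p C₁ =>
      mfbSup (f + (h : C(multilinearFormBall 𝕜 X, ℝ)))) := by
  refine ⟨-mfbSup (-f), ?_⟩
  rintro - ⟨h, rfl⟩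
  dsimp only
  have h1 : (h : C(multilinearFormBall 𝕜 X, ℝ)) =
      (f + (h : C(multilinearFormBall 𝕜 X, ℝ))) + (-f) := by ring
  have h2 : mfbSup ((h : C(multilinearFormBall 𝕜 X, ℝ))) ≤
      mfbSup (f + (h : C(multilinearFormBall 𝕜 X, ℝ))) + mfbSup (-f) := by
    have h4 := mfbSup_add (f + (h : C(multilinearFormBall 𝕜 X, ℝ))) (-f)
    rwa [← h1] at h4
  have h3 := hS h h.2
  linarith

include hS in
lemma mfbN_le {f : C(multilinearFormBall 𝕜 X, ℝ)} {h : C(multilinearFormBall 𝕜 X, ℝ)}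
    (hh : h ∈ mfbCone T p C₁) : mfbN T p C₁ f ≤ mfbSup (f + h) :=
  ciInf_le (mfbN_bddBelow hS f) (⟨h, hh⟩ : mfbCone T p C₁)

include hS in
lemma mfbN_le_sup (f : C(multilinearFormBall 𝕜 X, ℝ)) : mfbN T p C₁ f ≤ mfbSup f := by
  have := mfbN_le hS (f := f) mfbCone_zero_mem
  simpa using this

include hS in
lemma mfbN_add (f g : C(multilinearFormBall 𝕜 X, ℝ)) :
    mfbN T p C₁ (f + g) ≤ mfbN T p C₁ f + mfbN T p C₁ g := by
  refine le_of_forall_pos_le_add fun ε hε => ?_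
  obtain ⟨h₁, hh₁⟩ : ∃ h : mfbCone T p C₁,
      mfbSup (f + (h : C(multilinearFormBall 𝕜 X, ℝ))) < mfbN T p C₁ f + ε / 2 :=
    exists_lt_of_ciInf_lt (by linarith [mfbN_le_sup hS f] : mfbN T p C₁ f < mfbN T p C₁ f + ε / 2)
  obtain ⟨h₂, hh₂⟩ : ∃ h : mfbCone T p C₁,
      mfbSup (g + (h : C(multilinearFormBall 𝕜 X, ℝ))) < mfbN T p C₁ g + ε / 2 :=
    exists_lt_of_ciInf_lt (by linarith [mfbN_le_sup hS g] : mfbN T p C₁ g < mfbN T p C₁ g + ε / 2)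
  have hmem : (h₁ : C(multilinearFormBall 𝕜 X, ℝ)) + (h₂ : C(multilinearFormBall 𝕜 X, ℝ))
      ∈ mfbCone T p C₁ := mfbCone_add_mem h₁.2 h₂.2
  have step := mfbN_le hS (f := f + g) hmem
  have heq : (f + g) + ((h₁ : C(multilinearFormBall 𝕜 X, ℝ)) + h₂)
      = (f + (h₁ : C(multilinearFormBall 𝕜 X, ℝ))) + (g + h₂) := by ring
  rw [heq] at step
  have := mfbSup_add (f + (h₁ : C(multilinearFormBall 𝕜 X, ℝ)))
    (g + (h₂ : C(multilinearFormBall 𝕜 X, ℝ)))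
  linarith

include hS in
lemma mfbN_smul_le (hn : 0 < n) (hp : 0 < p) {c : ℝ} (hc : 0 < c)
    (f : C(multilinearFormBall 𝕜 X, ℝ)) : mfbN T p C₁ (c • f) ≤ c * mfbN T p C₁ f := by
  have key : ∀ h : mfbCone T p C₁, mfbN T p C₁ (c • f) ≤
      c * mfbSup (f + (h : C(multilinearFormBall 𝕜 X, ℝ))) := by
    intro h
    have hmem : c • (h : C(multilinearFormBall 𝕜 X, ℝ)) ∈ mfbCone T p C₁ :=
      mfbCone_smul_mem hn hp hc h.2
    have := mfbN_le hS (f := c • f) hmem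
    have heq : c • f + c • (h : C(multilinearFormBall 𝕜 X, ℝ))
        = c • (f + (h : C(multilinearFormBall 𝕜 X, ℝ))) := by
      rw [smul_add]
    rw [heq, mfbSup_smul c hc.le] at this
    exact this
  have : mfbN T p C₁ (c • f) / c ≤ mfbN T p C₁ f := by
    refine le_ciInf fun h => ?_
    rw [div_le_iff₀' hc]
    exact key h
  calc mfbN T p C₁ (c • f) = c * (mfbN T p C₁ (c • f) / c) := by field_simp
  _ ≤ c * mfbN T p C₁ f := by
      exact mul_le_mul_of_nonneg_left this hc.le

include hS in
lemma mfbN_smul (hn : 0 < n) (hp : 0 < p) {c : ℝ} (hc : 0 < c)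
    (f : C(multilinearFormBall 𝕜 X, ℝ)) : mfbN T p C₁ (c • f) = c * mfbN T p C₁ f := by
  refine le_antisymm (mfbN_smul_le hS hn hp hc f) ?_
  have := mfbN_smul_le hS hn hp (inv_pos.mpr hc) (c • f)
  rw [smul_smul, inv_mul_cancel₀ (ne_of_gt hc), one_smul] at this
  calc c * mfbN T p C₁ f ≤ c * (c⁻¹ * mfbN T p C₁ (c • f)) :=
        mul_le_mul_of_nonneg_left this hc.le
  _ = mfbN T p C₁ (c • f) := by field_simp

include hS in
lemma mfbN_zero_nonneg : 0 ≤ mfbN T p C₁ 0 := by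
  refine le_ciInf fun h => ?_
  simpa using hS h h.2

include hS in
lemma exists_mfb_state (hn : 0 < n) (hp : 0 < p) :
    ∃ φ : C(multilinearFormBall 𝕜 X, ℝ) →ₗ[ℝ] ℝ, ∀ f, φ f ≤ mfbN T p C₁ f := by
  obtain ⟨φ, -, hφ⟩ := exists_extension_of_le_sublinear
    (⟨⊥, 0⟩ : C(multilinearFormBall 𝕜 X, ℝ) →ₗ.[ℝ] ℝ) (mfbN T p C₁)
    (fun c hc f => mfbN_smul hS hn hp hc f)
    (fun f g => mfbN_add hS f g)
    (fun x => by
      have hx : (x : C(multilinearFormBall 𝕜 X, ℝ)) = 0 := (Submodule.mem_bot ℝ).mp x.2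
      have happ : (⟨⊥, 0⟩ : C(multilinearFormBall 𝕜 X, ℝ) →ₗ.[ℝ] ℝ) x = 0 := rfl
      rw [happ, hx]
      exact mfbN_zero_nonneg hS)
  exact ⟨φ, hφ⟩

end Part3

section Part4
open TopologicalSpace NNReal ENNReal BoundedContinuousFunction

variable {𝕜 : Type*} [RCLike 𝕜] {n : ℕ} {X : Fin n → Type*}
  [∀ i, NormedAddCommGroup (X i)] [∀ i, NormedSpace 𝕜 (X i)]
  (φ : C(multilinearFormBall 𝕜 X, ℝ) →ₗ[ℝ] ℝ) (hφ : ∀ f, φ f ≤ mfbSup f)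

include hφ in
lemma state_nonneg {f : C(multilinearFormBall 𝕜 X, ℝ)} (hf : ∀ B, 0 ≤ f B) : 0 ≤ φ f := by
  have h1 : φ (-f) ≤ mfbSup (-f) := hφ (-f)
  have h2 : mfbSup (-f) ≤ 0 := mfbSup_le fun B => by simpa using hf B
  have h3 : φ (-f) = -φ f := map_neg φ f
  linarith

include hφ in
lemma state_mono {f g : C(multilinearFormBall 𝕜 X, ℝ)} (hfg : ∀ B, f B ≤ g B) : φ f ≤ φ g := by
  have := state_nonneg φ hφ (f := g - f) fun B => by
    simpa using hfg B
  have h2 : φ (g - f) = φ g - φ f := map_sub φ g f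
  linarith

include hφ in
lemma state_one : φ 1 = 1 := by
  have h1 : φ 1 ≤ 1 := (hφ 1).trans (mfbSup_le fun B => by simp)
  have h2 : φ (-1) ≤ -1 := (hφ (-1)).trans (mfbSup_le fun B => by simp)
  have h3 : φ (-1) = -φ 1 := map_neg φ 1
  linarith

/-- A nonnegative bounded continuous function, coerced to a real continuous function. -/
def bcfToReal (f : CompactlySupportedContinuousMap (multilinearFormBall 𝕜 X) ℝ≥0) : C(multilinearFormBall 𝕜 X, ℝ) :=
  ⟨fun b => (f b : ℝ), NNReal.continuous_coe.comp f.continuous⟩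

@[simp] lemma bcfToReal_apply (f : CompactlySupportedContinuousMap (multilinearFormBall 𝕜 X) ℝ≥0)
    (b : multilinearFormBall 𝕜 X) : bcfToReal f b = (f b : ℝ) := rfl

lemma bcfToReal_add (f g : CompactlySupportedContinuousMap (multilinearFormBall 𝕜 X) ℝ≥0) :
    bcfToReal (f + g) = bcfToReal f + bcfToReal g := by
  ext b; simp [bcfToReal]

lemma bcfToReal_smul (c : ℝ≥0) (f : CompactlySupportedContinuousMap (multilinearFormBall 𝕜 X) ℝ≥0) :
    bcfToReal (c • f) = (c : ℝ) • bcfToReal f := by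
  ext b; simp [bcfToReal, NNReal.smul_def]

/-- The positive functional on nonnegative bounded continuous functions induced by the state. -/
noncomputable def stateNN (hφ : ∀ f, φ f ≤ mfbSup f) :
    (CompactlySupportedContinuousMap (multilinearFormBall 𝕜 X) ℝ≥0) →ₗ[ℝ≥0] ℝ≥0 where
  toFun f := ⟨φ (bcfToReal f), state_nonneg φ hφ fun B => NNReal.coe_nonneg _⟩
  map_add' f g := by
    ext
    simp [bcfToReal_add, map_add]
    rfl
  map_smul' c f := by
    ext
    simp [bcfToReal_smul, NNReal.smul_def]
    rfl

lemma stateNN_coe (f : CompactlySupportedContinuousMap (multilinearFormBall 𝕜 X) ℝ≥0) :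
    ((stateNN φ hφ f : ℝ≥0) : ℝ) = φ (bcfToReal f) := rfl

lemma riesz_sup_disjoint (K₁ K₂ : Compacts (multilinearFormBall 𝕜 X))
    (hd : Disjoint (K₁ : Set (multilinearFormBall 𝕜 X)) K₂) :
    rieszContentAux (stateNN φ hφ) (K₁ ⊔ K₂)
      = rieszContentAux (stateNN φ hφ) K₁ + rieszContentAux (stateNN φ hφ) K₂ := by
  refine le_antisymm (rieszContentAux_sup_le _ K₁ K₂) ?_
  refine le_csInf (rieszContentAux_image_nonempty _ (K₁ ⊔ K₂)) ?_
  rintro - ⟨f, hf, rfl⟩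
  obtain ⟨u, hu0, hu1, hu01⟩ :=
    exists_continuous_zero_one_of_isCompact K₁.2 K₂.2.isClosed hd
  set w₁ : CompactlySupportedContinuousMap (multilinearFormBall 𝕜 X) ℝ≥0 :=
    CompactlySupportedContinuousMap.continuousMapEquiv
      ⟨fun b => f b * Real.toNNReal (1 - u b),
        f.continuous.mul (continuous_real_toNNReal.comp (continuous_const.sub u.continuous))⟩
    with hw₁
  set w₂ : CompactlySupportedContinuousMap (multilinearFormBall 𝕜 X) ℝ≥0 :=
    CompactlySupportedContinuousMap.continuousMapEquiv
      ⟨fun b => f b * Real.toNNReal (u b),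
        f.continuous.mul (continuous_real_toNNReal.comp u.continuous)⟩
    with hw₂
  have hsum : w₁ + w₂ = f := by
    ext b
    have h0 : (0:ℝ) ≤ u b := (hu01 b).1
    have h1 : u b ≤ 1 := (hu01 b).2
    rw [hw₁, hw₂]
    show ((f b * (1 - u b).toNNReal + f b * (u b).toNNReal : ℝ≥0) : ℝ) = f b
    push_cast
    rw [Real.coe_toNNReal _ (by linarith : (0:ℝ) ≤ 1 - u b), Real.coe_toNNReal _ h0]
    ring
  have hK₁ : rieszContentAux (stateNN φ hφ) K₁ ≤ stateNN φ hφ w₁ := by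
    refine rieszContentAux_le _ fun b hb => ?_
    have hub : u b = 0 := hu0 hb
    have hfb : (1:ℝ≥0) ≤ f b := hf b (Or.inl hb)
    have : w₁ b = f b := by
      simp [hw₁, hub]
    rw [this]; exact hfb
  have hK₂ : rieszContentAux (stateNN φ hφ) K₂ ≤ stateNN φ hφ w₂ := by
    refine rieszContentAux_le _ fun b hb => ?_
    have hub : u b = 1 := hu1 hb
    have hfb : (1:ℝ≥0) ≤ f b := hf b (Or.inr hb)
    have : w₂ b = f b := by
      simp [hw₂, hub]
    rw [this]; exact hfb
  calc rieszContentAux (stateNN φ hφ) K₁ + rieszContentAux (stateNN φ hφ) K₂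
      ≤ stateNN φ hφ w₁ + stateNN φ hφ w₂ := add_le_add hK₁ hK₂
  _ = stateNN φ hφ (w₁ + w₂) := (map_add _ _ _).symm
  _ = stateNN φ hφ f := by rw [hsum]

/-- The content induced by the state. -/
noncomputable def mfbContent : MeasureTheory.Content (multilinearFormBall 𝕜 X) where
  toFun := rieszContentAux (stateNN φ hφ)
  mono' K₁ K₂ h := rieszContentAux_mono _ h
  sup_le' := rieszContentAux_sup_le _
  sup_disjoint' K₁ K₂ hd _ _ := riesz_sup_disjoint φ hφ K₁ K₂ hd

lemma mfbContent_apply (K : Compacts (multilinearFormBall 𝕜 X)) :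
    mfbContent φ hφ K = (rieszContentAux (stateNN φ hφ) K : ℝ≥0∞) := rfl

lemma mfbContent_regular : MeasureTheory.Content.ContentRegular (mfbContent φ hφ) := by
  intro K
  refine le_antisymm (le_iInf fun K' => le_iInf fun hK' => ?_) ?_
  · exact (mfbContent φ hφ).mono K K' (hK'.trans interior_subset)
  · refine le_of_forall_gt_imp_ge_of_dense fun r hr => ?_
    obtain ⟨s, hs1, hs2⟩ := ENNReal.lt_iff_exists_nnreal_btwn.mp hr
    have hKs : rieszContentAux (stateNN φ hφ) K < s := by
      rwa [mfbContent_apply, ENNReal.coe_lt_coe] at hs1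
    have hspos : (0:ℝ≥0) < s := lt_of_le_of_lt zero_le' hKs
    set lK := rieszContentAux (stateNN φ hφ) K with hlK
    have hε : 0 < s - lK := tsub_pos_of_lt hKs
    obtain ⟨f, hf1, hf2⟩ := exists_lt_rieszContentAux_add_pos (stateNN φ hφ) K hε
    have hΛf : stateNN φ hφ f < s := by
      calc stateNN φ hφ f < lK + (s - lK) := hf2
      _ = s := add_tsub_cancel_of_le hKs.le
    set t : ℝ≥0 := (stateNN φ hφ f + s) / 2 with ht
    have htpos : (0:ℝ≥0) < t := by
      rw [ht]
      have : (0:ℝ≥0) < stateNN φ hφ f + s := lt_of_lt_of_le hspos le_add_self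
      positivity
    have hts : t < s := by
      rw [ht, div_lt_iff₀ (by norm_num : (0:ℝ≥0) < 2)]
      calc stateNN φ hφ f + s < s + s := by
            exact add_lt_add_left hΛf s
      _ = s * 2 := by ring
    have hfle : stateNN φ hφ f ≤ t := by
      rw [ht, le_div_iff₀ (by norm_num : (0:ℝ≥0) < 2)]
      calc stateNN φ hφ f * 2 = stateNN φ hφ f + stateNN φ hφ f := by ring
      _ ≤ stateNN φ hφ f + s := add_le_add_right hΛf.le _
    set Kset : Set (multilinearFormBall 𝕜 X) := {b | t / s ≤ f b} with hKset
    have hKcl : IsClosed Kset := isClosed_le continuous_const f.continuous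
    set K' : Compacts (multilinearFormBall 𝕜 X) := ⟨Kset, hKcl.isCompact⟩ with hK'
    have hdivlt : t / s < 1 := (div_lt_one hspos).mpr hts
    have hopen : IsOpen {b : multilinearFormBall 𝕜 X | t / s < f b} :=
      isOpen_lt continuous_const f.continuous
    have hsub : (K : Set (multilinearFormBall 𝕜 X)) ⊆ interior Kset := by
      refine subset_trans (fun b hb => ?_)
        (interior_maximal (fun b (hb : t / s < f b) => le_of_lt hb) hopen)
      exact lt_of_lt_of_le hdivlt (hf1 b hb)
    have hinv : (s / t) * (t / s) = 1 := by
      rw [div_mul_div_comm, mul_comm]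
      exact div_self (by positivity)
    have hK'le : rieszContentAux (stateNN φ hφ) K' ≤ s := by
      have htest : ∀ b ∈ K', (1:ℝ≥0) ≤ ((s / t) • f) b := by
        intro b hb
        have hb' : t / s ≤ f b := hb
        calc (1:ℝ≥0) = (s / t) * (t / s) := hinv.symm
        _ ≤ (s / t) * f b := mul_le_mul_right hb' _
        _ = ((s / t) • f) b := by simp [NNReal.smul_def]
      calc rieszContentAux (stateNN φ hφ) K' ≤ stateNN φ hφ ((s / t) • f) :=
            rieszContentAux_le _ htest
      _ = (s / t) * stateNN φ hφ f := by rw [_root_.map_smul]; simp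
      _ ≤ (s / t) * t := mul_le_mul_right hfle _
      _ = s := div_mul_cancel₀ s (ne_of_gt htpos)
    calc (⨅ (K' : Compacts (multilinearFormBall 𝕜 X))
            (_ : (K : Set (multilinearFormBall 𝕜 X)) ⊆ interior (K' : Set (multilinearFormBall 𝕜 X))),
          (mfbContent φ hφ) K')
        ≤ (mfbContent φ hφ) K' := by
          exact iInf₂_le K' hsub
    _ ≤ (s : ℝ≥0∞) := by
        rw [mfbContent_apply, ENNReal.coe_le_coe]
        exact hK'le
    _ ≤ r := hs2.le

end Part4

section Part5
open TopologicalSpace NNReal ENNReal BoundedContinuousFunction Set MeasureTheory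

variable {𝕜 : Type*} [RCLike 𝕜] {n : ℕ} {X : Fin n → Type*}
  [∀ i, NormedAddCommGroup (X i)] [∀ i, NormedSpace 𝕜 (X i)]
  (φ : C(multilinearFormBall 𝕜 X, ℝ) →ₗ[ℝ] ℝ) (hφ : ∀ f, φ f ≤ mfbSup f)

/-- The Pietsch measure induced by the state. -/
noncomputable def mfbMeasure : Measure (multilinearFormBall 𝕜 X) :=
  (mfbContent φ hφ).measure

lemma mfbMeasure_regular : (mfbMeasure φ hφ).Regular :=
  MeasureTheory.Content.regular _

lemma stateNN_one : stateNN φ hφ (CompactlySupportedContinuousMap.continuousMapEquiv 1) = 1 := by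
  have h1 : bcfToReal (CompactlySupportedContinuousMap.continuousMapEquiv (1 : C(multilinearFormBall 𝕜 X, ℝ≥0))) = 1 := by
    ext b; simp [bcfToReal]
  apply NNReal.coe_injective
  rw [stateNN_coe, h1, state_one φ hφ]
  simp

lemma one_le_content_top :
    (1:ℝ≥0) ≤ rieszContentAux (stateNN φ hφ)
      ⟨Set.univ, isCompact_univ⟩ := by
  refine le_csInf (rieszContentAux_image_nonempty _ _) ?_
  rintro - ⟨f, hf, rfl⟩
  have h1 : φ 1 ≤ φ (bcfToReal f) := by
    refine state_mono φ hφ fun B => ?_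
    have := hf B (Set.mem_univ B)
    simp only [ContinuousMap.one_apply, bcfToReal_apply]
    exact_mod_cast this
  rw [state_one φ hφ] at h1
  rw [← NNReal.coe_le_coe, stateNN_coe]
  simpa using h1

lemma content_top_le_one :
    rieszContentAux (stateNN φ hφ)
      (⟨Set.univ, isCompact_univ⟩ : Compacts (multilinearFormBall 𝕜 X)) ≤ 1 := by
  have h := rieszContentAux_le (stateNN φ hφ)
    (K := ⟨Set.univ, isCompact_univ⟩) (f := CompactlySupportedContinuousMap.continuousMapEquiv 1) (fun x _ => by simp)
  rwa [stateNN_one φ hφ] at h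

lemma mfbMeasure_univ : mfbMeasure φ hφ Set.univ = 1 := by
  have hmeas : mfbMeasure φ hφ Set.univ = (mfbContent φ hφ).outerMeasure Set.univ :=
    MeasureTheory.Content.measure_apply _ MeasurableSet.univ
  rw [hmeas, (mfbContent φ hφ).outerMeasure_of_isOpen Set.univ isOpen_univ]
  apply le_antisymm
  · refine iSup_le fun K => iSup_le fun _ => ?_
    calc ((mfbContent φ hφ) K) ≤ (mfbContent φ hφ) ⟨Set.univ, isCompact_univ⟩ :=
          (mfbContent φ hφ).mono _ _ (Set.subset_univ _)
    _ ≤ 1 := by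
        rw [mfbContent_apply]
        exact_mod_cast ENNReal.coe_le_coe.mpr (content_top_le_one φ hφ)
  · have h := MeasureTheory.Content.le_innerContent (mfbContent φ hφ)
      ⟨Set.univ, isCompact_univ⟩ ⟨Set.univ, isOpen_univ⟩ (Set.subset_univ _)
    refine le_trans ?_ h
    rw [mfbContent_apply]
    exact_mod_cast ENNReal.coe_le_coe.mpr (one_le_content_top φ hφ)

lemma mfbMeasure_prob : IsProbabilityMeasure (mfbMeasure φ hφ) := ⟨mfbMeasure_univ φ hφ⟩

lemma mfb_integrable (g : C(multilinearFormBall 𝕜 X, ℝ)) :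
    Integrable (fun B => g B) (mfbMeasure φ hφ) := by
  haveI := mfbMeasure_prob φ hφ
  have hcs : HasCompactSupport (⇑g) :=
    IsCompact.of_isClosed_subset isCompact_univ (isClosed_tsupport _) (Set.subset_univ _)
  exact g.continuous.integrable_of_hasCompactSupport hcs

lemma state_le_integral (g : C(multilinearFormBall 𝕜 X, ℝ)) (hg : ∀ B, 0 ≤ g B) :
    φ g ≤ ∫ B, g B ∂(mfbMeasure φ hφ) := by
  haveI := mfbMeasure_prob φ hφ
  haveI : IsFiniteMeasure (mfbMeasure φ hφ) := ⟨by rw [mfbMeasure_univ φ hφ]; exact one_lt_top⟩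
  refine le_of_forall_pos_le_add fun δ hδ => ?_
  set M := mfbSup g with hM
  obtain ⟨N, hN1, hNM⟩ : ∃ N : ℕ, 1 ≤ N ∧ M ≤ N * δ := by
    refine ⟨Nat.ceil (M / δ) + 1, by omega, ?_⟩
    have h1 : M / δ ≤ (Nat.ceil (M / δ) : ℝ) + 1 := (Nat.le_ceil _).trans (by linarith)
    have := (div_le_iff₀ hδ).mp h1
    push_cast
    linarith
  set Kset : ℕ → Set (multilinearFormBall 𝕜 X) := fun i => {b | (i:ℝ)*δ ≤ g b} with hKset
  have hKcl : ∀ i, IsClosed (Kset i) := fun i => isClosed_le continuous_const g.continuous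
  set K : ℕ → Compacts (multilinearFormBall 𝕜 X) := fun i => ⟨Kset i, (hKcl i).isCompact⟩
    with hK
  set G : ℕ → C(multilinearFormBall 𝕜 X, ℝ) :=
    fun i => ⟨fun b => min (g b) ((i:ℝ)*δ), g.continuous.min continuous_const⟩ with hG
  have hGb : ∀ (i : ℕ) b, G i b = min (g b) ((i:ℝ)*δ) := fun i b => rfl
  have htel : ∀ b, ∑ i ∈ Finset.range N, (G (i+1) b - G i b) = g b := by
    intro b
    rw [Finset.sum_range_sub (fun i => G i b)]
    have h0 : G 0 b = 0 := by
      rw [hGb]; simp [min_eq_right (hg b)]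
    have hN' : G N b = g b := by
      rw [hGb]; exact min_eq_left ((le_mfbSup g b).trans hNM)
    rw [h0, hN', sub_zero]
  have hstep : ∀ i : ℕ, φ (G (i+1) - G i)
      ≤ δ * ((rieszContentAux (stateNN φ hφ) (K i) : ℝ≥0) : ℝ) := by
    intro i
    have hb : ∀ (h : CompactlySupportedContinuousMap (multilinearFormBall 𝕜 X) ℝ≥0), (∀ b ∈ K i, 1 ≤ h b) →
        φ (G (i+1) - G i) ≤ δ * φ (bcfToReal h) := by
      intro h hh
      have hpt : ∀ b, (G (i+1) - G i) b ≤ ((δ:ℝ) • bcfToReal h) b := by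
        intro b
        rw [ContinuousMap.sub_apply, ContinuousMap.smul_apply, bcfToReal_apply, smul_eq_mul]
        by_cases hbK : (i:ℝ)*δ ≤ g b
        · have h1 : G i b = (i:ℝ)*δ := by rw [hGb]; exact min_eq_right hbK
          have h2 : G (i+1) b ≤ ((i:ℝ)+1)*δ := by
            rw [hGb]; push_cast; exact min_le_right _ _
          have h3 : (1:ℝ) ≤ (h b : ℝ) := by exact_mod_cast hh b hbK
          have h4 : δ * 1 ≤ δ * (h b : ℝ) := by
            exact mul_le_mul_of_nonneg_left h3 hδ.le
          rw [h1]
          nlinarith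
        · push_neg at hbK
          have h1 : G i b = g b := by rw [hGb]; exact min_eq_left hbK.le
          have h2 : G (i+1) b = g b := by
            rw [hGb]
            refine min_eq_left (hbK.le.trans ?_)
            push_cast
            exact mul_le_mul_of_nonneg_right (by linarith : (i:ℝ) ≤ (i:ℝ)+1) hδ.le
          rw [h1, h2, sub_self]
          positivity
      calc φ (G (i+1) - G i) ≤ φ ((δ:ℝ) • bcfToReal h) := state_mono φ hφ hpt
      _ = δ * φ (bcfToReal h) := by rw [_root_.map_smul, smul_eq_mul]
    have hcoe : ((rieszContentAux (stateNN φ hφ) (K i) : ℝ≥0) : ℝ)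
        = sInf ((fun y : ℝ≥0 => (y:ℝ)) '' ((stateNN φ hφ) '' {h | ∀ b ∈ K i, 1 ≤ h b})) := by
      rw [rieszContentAux, NNReal.coe_sInf]
    rw [hcoe, ← div_le_iff₀' hδ]
    refine le_csInf (((rieszContentAux_image_nonempty (stateNN φ hφ) (K i))).image _) ?_
    rintro - ⟨-, ⟨h, hh, rfl⟩, rfl⟩
    rw [div_le_iff₀' hδ]
    exact hb h hh
  have hcontent_meas : ∀ i, ((mfbMeasure φ hφ) (Kset i)).toReal
      = ((rieszContentAux (stateNN φ hφ) (K i) : ℝ≥0) : ℝ) := by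
    intro i
    have h1 := MeasureTheory.Content.measure_eq_content_of_regular (mfbContent φ hφ)
      (mfbContent_regular φ hφ) (K i)
    have h2 : (mfbMeasure φ hφ) (Kset i) = (mfbContent φ hφ) (K i) := h1
    rw [h2, mfbContent_apply, ENNReal.coe_toReal]
  have hm01 : ((mfbMeasure φ hφ) (Kset 0)).toReal ≤ 1 := by
    have h1 : (mfbMeasure φ hφ) (Kset 0) ≤ 1 := by
      rw [← mfbMeasure_univ φ hφ]
      exact measure_mono (Set.subset_univ _)
    calc ((mfbMeasure φ hφ) (Kset 0)).toReal ≤ (1:ℝ≥0∞).toReal :=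
          ENNReal.toReal_mono one_ne_top h1
    _ = 1 := by simp
  have hind : ∀ (i : ℕ) b, Set.indicator (Kset (i+1)) (fun _ => δ) b ≤ G (i+1) b - G i b := by
    intro i b
    by_cases hbK : b ∈ Kset (i+1)
    · have hb1 : ((i:ℝ)+1)*δ ≤ g b := by
        have := hbK
        rw [hKset] at this
        push_cast at this ⊢
        exact this
      have hb0 : (i:ℝ)*δ ≤ g b :=
        le_trans (mul_le_mul_of_nonneg_right (by linarith : (i:ℝ) ≤ (i:ℝ)+1) hδ.le) hb1
      have h1 : G i b = (i:ℝ)*δ := by rw [hGb]; exact min_eq_right hb0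
      have h2 : G (i+1) b = ((i:ℝ)+1)*δ := by
        rw [hGb]; push_cast; exact min_eq_right hb1
      rw [Set.indicator_of_mem hbK, h1, h2]
      ring_nf
      linarith
    · rw [Set.indicator_of_notMem hbK]
      have : G i b ≤ G (i+1) b := by
        rw [hGb, hGb]
        exact min_le_min le_rfl
          (mul_le_mul_of_nonneg_right (by push_cast; linarith : (i:ℝ) ≤ ((i+1:ℕ):ℝ)) hδ.le)
      linarith
  have hint_ind : ∀ i : ℕ,
      Integrable (Set.indicator (Kset (i+1)) (fun _ => δ)) (mfbMeasure φ hφ) := fun i =>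
    (integrable_const δ).indicator (hKcl _).measurableSet
  have hsum_le : ∀ b, ∑ i ∈ Finset.range N, Set.indicator (Kset (i+1)) (fun _ => δ) b ≤ g b := by
    intro b
    calc ∑ i ∈ Finset.range N, Set.indicator (Kset (i+1)) (fun _ => δ) b
        ≤ ∑ i ∈ Finset.range N, (G (i+1) b - G i b) :=
          Finset.sum_le_sum fun i _ => hind i b
    _ = g b := htel b
  have hsint : Integrable
      (fun b => ∑ i ∈ Finset.range N, Set.indicator (Kset (i+1)) (fun _ => δ) b)
      (mfbMeasure φ hφ) := integrable_finset_sum _ fun i _ => hint_ind i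
  have hgint : Integrable (fun b => g b) (mfbMeasure φ hφ) := mfb_integrable φ hφ g
  have hIle : (∫ b, (∑ i ∈ Finset.range N, Set.indicator (Kset (i+1)) (fun _ => δ) b)
      ∂(mfbMeasure φ hφ)) ≤ ∫ b, g b ∂(mfbMeasure φ hφ) :=
    integral_mono hsint hgint hsum_le
  have hIeq : (∫ b, (∑ i ∈ Finset.range N, Set.indicator (Kset (i+1)) (fun _ => δ) b)
      ∂(mfbMeasure φ hφ))
      = ∑ i ∈ Finset.range N, δ * ((mfbMeasure φ hφ) (Kset (i+1))).toReal := by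
    rw [integral_finset_sum _ fun i _ => hint_ind i]
    refine Finset.sum_congr rfl fun i _ => ?_
    rw [integral_indicator_const _ (hKcl _).measurableSet]
    rw [smul_eq_mul, measureReal_def]
    ring
  have hφg : φ g = ∑ i ∈ Finset.range N, φ (G (i+1) - G i) := by
    have hgsum : g = ∑ i ∈ Finset.range N, (G (i+1) - G i) := by
      ext b
      rw [ContinuousMap.sum_apply]
      simp only [ContinuousMap.sub_apply]
      exact (htel b).symm
    conv_lhs => rw [hgsum]
    exact map_sum φ _ _
  have main : φ g ≤ δ + ∑ i ∈ Finset.range N, δ * ((mfbMeasure φ hφ) (Kset (i+1))).toReal := by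
    rw [hφg]
    have step1 : ∑ i ∈ Finset.range N, φ (G (i+1) - G i)
        ≤ ∑ i ∈ Finset.range N, δ * ((mfbMeasure φ hφ) (Kset i)).toReal := by
      refine Finset.sum_le_sum fun i _ => ?_
      rw [hcontent_meas i]
      exact hstep i
    obtain ⟨N', rfl⟩ : ∃ N', N = N' + 1 := ⟨N-1, by omega⟩
    have step2 : ∑ i ∈ Finset.range (N'+1), δ * ((mfbMeasure φ hφ) (Kset i)).toReal
        = (∑ i ∈ Finset.range N', δ * ((mfbMeasure φ hφ) (Kset (i+1))).toReal)
          + δ * ((mfbMeasure φ hφ) (Kset 0)).toReal :=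
      Finset.sum_range_succ' (fun i => δ * ((mfbMeasure φ hφ) (Kset i)).toReal) N'
    have step3 : ∑ i ∈ Finset.range N', δ * ((mfbMeasure φ hφ) (Kset (i+1))).toReal
        ≤ ∑ i ∈ Finset.range (N'+1), δ * ((mfbMeasure φ hφ) (Kset (i+1))).toReal := by
      refine Finset.sum_le_sum_of_subset_of_nonneg
        (Finset.range_subset_range.mpr (by omega)) fun i _ _ => ?_
      positivity
    have step4 : δ * ((mfbMeasure φ hφ) (Kset 0)).toReal ≤ δ :=
      (mul_le_mul_of_nonneg_left hm01 hδ.le).trans_eq (mul_one δ)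
    linarith
  linarith [hIle, hIeq.symm.trans_le hIle]

end Part5

section Part6
open MeasureTheory

variable {𝕜 : Type*} [RCLike 𝕜] {n : ℕ} {X : Fin n → Type*}
  [∀ i, NormedAddCommGroup (X i)] [∀ i, NormedSpace 𝕜 (X i)]
  {Y : Type*} [NormedAddCommGroup Y] [NormedSpace 𝕜 Y]

lemma mfb_eval_continuous {p : ℝ} (hp0 : 0 ≤ p) (x : Π i, X i) :
    Continuous (fun B : multilinearFormBall 𝕜 X => ‖(B : (Π i, X i) → 𝕜) x‖ ^ p) := by
  have h1 : Continuous (fun B : multilinearFormBall 𝕜 X => (B : (Π i, X i) → 𝕜) x) :=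
    (continuous_apply x).comp continuous_subtype_val
  exact (h1.norm).rpow_const fun _ => Or.inr hp0

lemma mfb_backward {T : ContinuousMultilinearMap 𝕜 X Y} {p : ℝ} (hp : 0 < p)
    (h : ∃ C > 0, ∃ μ : Measure (multilinearFormBall 𝕜 X),
        μ.Regular ∧ IsProbabilityMeasure μ ∧
        ∀ x : Π i, X i, ‖T x‖ ≤
          C * (∫ B, ‖(B : (Π i, X i) → 𝕜) x‖ ^ p ∂μ) ^ (1 / p)) :
    ∃ C₁ > 0, ∀ (m : ℕ) (x : Fin m → Π i, X i),
        ∑ j, ‖T (x j)‖ ^ p ≤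
          C₁ * ⨆ B : multilinearFormBall 𝕜 X,
            ∑ j, ‖(B : (Π i, X i) → 𝕜) (x j)‖ ^ p := by
  obtain ⟨C, hC, μ, hreg, hprob, hdom⟩ := h
  refine ⟨C ^ p, Real.rpow_pos_of_pos hC p, fun m x => ?_⟩
  haveI := hprob
  have hint : ∀ j, Integrable (fun B : multilinearFormBall 𝕜 X =>
      ‖(B : (Π i, X i) → 𝕜) (x j)‖ ^ p) μ := by
    intro j
    have hcs : HasCompactSupport (fun B : multilinearFormBall 𝕜 X =>
        ‖(B : (Π i, X i) → 𝕜) (x j)‖ ^ p) :=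
      IsCompact.of_isClosed_subset isCompact_univ (isClosed_tsupport _) (Set.subset_univ _)
    exact (mfb_eval_continuous hp.le (x j)).integrable_of_hasCompactSupport hcs
  have h1 : ∀ j, ‖T (x j)‖ ^ p ≤
      C ^ p * ∫ B, ‖(B : (Π i, X i) → 𝕜) (x j)‖ ^ p ∂μ := by
    intro j
    have hInn : 0 ≤ ∫ B, ‖(B : (Π i, X i) → 𝕜) (x j)‖ ^ p ∂μ :=
      integral_nonneg fun B => Real.rpow_nonneg (norm_nonneg _) _
    calc ‖T (x j)‖ ^ p
        ≤ (C * (∫ B, ‖(B : (Π i, X i) → 𝕜) (x j)‖ ^ p ∂μ) ^ (1/p)) ^ p :=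
          Real.rpow_le_rpow (norm_nonneg _) (hdom (x j)) hp.le
    _ = C ^ p * (((∫ B, ‖(B : (Π i, X i) → 𝕜) (x j)‖ ^ p ∂μ) ^ (1/p)) ^ p) :=
          Real.mul_rpow hC.le (Real.rpow_nonneg hInn _)
    _ = C ^ p * ∫ B, ‖(B : (Π i, X i) → 𝕜) (x j)‖ ^ p ∂μ := by
          rw [one_div, Real.rpow_inv_rpow hInn hp.ne']
  have hbdd : BddAbove (Set.range fun B : multilinearFormBall 𝕜 X =>
      ∑ j, ‖(B : (Π i, X i) → 𝕜) (x j)‖ ^ p) := by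
    refine ⟨∑ j, (∏ i, ‖x j i‖) ^ p, ?_⟩
    rintro - ⟨B, rfl⟩
    exact Finset.sum_le_sum fun j _ =>
      Real.rpow_le_rpow (norm_nonneg _) (mfb_norm_le B.2 (x j)) hp.le
  have h3 : (∫ B, (∑ j, ‖(B : (Π i, X i) → 𝕜) (x j)‖ ^ p) ∂μ)
      ≤ ⨆ B : multilinearFormBall 𝕜 X, ∑ j, ‖(B : (Π i, X i) → 𝕜) (x j)‖ ^ p := by
    have hle : ∀ B : multilinearFormBall 𝕜 X,
        (∑ j, ‖(B : (Π i, X i) → 𝕜) (x j)‖ ^ p)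
          ≤ ⨆ B' : multilinearFormBall 𝕜 X, ∑ j, ‖(B' : (Π i, X i) → 𝕜) (x j)‖ ^ p :=
      fun B => le_ciSup hbdd B
    calc (∫ B, (∑ j, ‖(B : (Π i, X i) → 𝕜) (x j)‖ ^ p) ∂μ)
        ≤ ∫ _B, (⨆ B' : multilinearFormBall 𝕜 X,
            ∑ j, ‖(B' : (Π i, X i) → 𝕜) (x j)‖ ^ p) ∂μ :=
          integral_mono (integrable_finset_sum _ fun j _ => hint j) (integrable_const _) hle
    _ = ⨆ B' : multilinearFormBall 𝕜 X, ∑ j, ‖(B' : (Π i, X i) → 𝕜) (x j)‖ ^ p := by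
          simp [measure_univ]
  calc ∑ j, ‖T (x j)‖ ^ p
      ≤ ∑ j, C ^ p * ∫ B, ‖(B : (Π i, X i) → 𝕜) (x j)‖ ^ p ∂μ := Finset.sum_le_sum fun j _ => h1 j
  _ = C ^ p * ∑ j, ∫ B, ‖(B : (Π i, X i) → 𝕜) (x j)‖ ^ p ∂μ := by rw [← Finset.mul_sum]
  _ = C ^ p * ∫ B, (∑ j, ‖(B : (Π i, X i) → 𝕜) (x j)‖ ^ p) ∂μ := by
        rw [integral_finset_sum _ fun j _ => hint j]
  _ ≤ C ^ p * ⨆ B : multilinearFormBall 𝕜 X, ∑ j, ‖(B : (Π i, X i) → 𝕜) (x j)‖ ^ p :=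
        mul_le_mul_of_nonneg_left h3 (Real.rpow_pos_of_pos hC p).le

lemma mfb_forward {T : ContinuousMultilinearMap 𝕜 X Y} {p : ℝ} (hn : 0 < n) (hp : 0 < p)
    (h : ∃ C₁ > 0, ∀ (m : ℕ) (x : Fin m → Π i, X i),
        ∑ j, ‖T (x j)‖ ^ p ≤
          C₁ * ⨆ B : multilinearFormBall 𝕜 X,
            ∑ j, ‖(B : (Π i, X i) → 𝕜) (x j)‖ ^ p) :
    ∃ C > 0, ∃ μ : Measure (multilinearFormBall 𝕜 X),
        μ.Regular ∧ IsProbabilityMeasure μ ∧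
        ∀ x : Π i, X i, ‖T x‖ ≤
          C * (∫ B, ‖(B : (Π i, X i) → 𝕜) x‖ ^ p ∂μ) ^ (1 / p) := by
  obtain ⟨C₁, hC₁, hyp⟩ := h
  have hS : ∀ h ∈ mfbCone T p C₁, 0 ≤ mfbSup h :=
    fun h hh => mfbCone_sup_nonneg hyp hC₁ hh
  obtain ⟨φ, hφN⟩ := exists_mfb_state hS hn hp
  have hφ : ∀ f, φ f ≤ mfbSup f := fun f => (hφN f).trans (mfbN_le_sup hS f)
  have hφcone : ∀ h ∈ mfbCone T p C₁, 0 ≤ φ h := by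
    intro h hh
    have h1 : φ (-h) ≤ mfbN T p C₁ (-h) := hφN (-h)
    have h2 : mfbN T p C₁ (-h) ≤ mfbSup ((-h) + h) := mfbN_le hS hh
    have h3 : (-h) + h = (0 : C(multilinearFormBall 𝕜 X, ℝ)) := by ring
    have h4 : mfbSup (0 : C(multilinearFormBall 𝕜 X, ℝ)) = 0 := by
      simp [mfbSup]
    rw [h3, h4] at h2
    have h5 : φ (-h) = -φ h := map_neg φ h
    linarith
  refine ⟨C₁ ^ (1/p), Real.rpow_pos_of_pos hC₁ _, mfbMeasure φ hφ, mfbMeasure_regular φ hφ,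
    mfbMeasure_prob φ hφ, fun x => ?_⟩
  set gx : C(multilinearFormBall 𝕜 X, ℝ) :=
    ⟨fun B => ‖(B : (Π i, X i) → 𝕜) x‖ ^ p, mfb_eval_continuous hp.le x⟩ with hgx
  have key : ‖T x‖ ^ p ≤ C₁ * φ gx := by
    have h0 := hφcone _ (mfbCone_single_mem (T := T) (C₁ := C₁) hp x)
    have h1 : φ (C₁ • (⟨fun B => ‖(B : (Π i, X i) → 𝕜) x‖ ^ p,
          mfb_eval_continuous hp.le x⟩ : C(multilinearFormBall 𝕜 X, ℝ))
        - (‖T x‖ ^ p) • 1) = C₁ * φ gx - ‖T x‖ ^ p * φ 1 := by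
      rw [map_sub, _root_.map_smul, _root_.map_smul, smul_eq_mul, smul_eq_mul]
    rw [state_one φ hφ] at h1
    have h0' : 0 ≤ C₁ * φ gx - ‖T x‖ ^ p * 1 := by
      rw [← h1]
      exact h0
    linarith
  have hIgx : φ gx ≤ ∫ B, gx B ∂(mfbMeasure φ hφ) :=
    state_le_integral φ hφ gx fun B => Real.rpow_nonneg (norm_nonneg _) _
  have hInn : 0 ≤ ∫ B, ‖(B : (Π i, X i) → 𝕜) x‖ ^ p ∂(mfbMeasure φ hφ) :=
    integral_nonneg fun B => Real.rpow_nonneg (norm_nonneg _) _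
  have hgxI : (∫ B, gx B ∂(mfbMeasure φ hφ))
      = ∫ B, ‖(B : (Π i, X i) → 𝕜) x‖ ^ p ∂(mfbMeasure φ hφ) := rfl
  calc ‖T x‖ = (‖T x‖ ^ p) ^ (1/p) := by
        rw [one_div, Real.rpow_rpow_inv (norm_nonneg _) hp.ne']
  _ ≤ (C₁ * ∫ B, ‖(B : (Π i, X i) → 𝕜) x‖ ^ p ∂(mfbMeasure φ hφ)) ^ (1/p) := by
        refine Real.rpow_le_rpow (Real.rpow_nonneg (norm_nonneg _) _) ?_ (by positivity)
        refine key.trans ?_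
        refine mul_le_mul_of_nonneg_left ?_ hC₁.le
        rw [← hgxI]
        exact hIgx
  _ = C₁ ^ (1/p) * (∫ B, ‖(B : (Π i, X i) → 𝕜) x‖ ^ p ∂(mfbMeasure φ hφ)) ^ (1/p) :=
        Real.mul_rpow hC₁.le hInn

end Part6


/-- Dimant's domination theorem for strongly `p`-summing multilinear mappings: a continuous
`n`-linear map `T : X₁ × ⋯ × Xₙ → Y` is strongly `p`-summing if and only if it satisfies
a Pietsch-type domination by a regular Borel probability measure on the closed unit ball
of the space of continuous `n`-linear forms, with the topology of pointwise convergence. -/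
theorem strongly_summing_multilinear_domination
    {𝕜 : Type*} [RCLike 𝕜] {n : ℕ} (hn : 0 < n)
    {X : Fin n → Type*} [∀ i, NormedAddCommGroup (X i)] [∀ i, NormedSpace 𝕜 (X i)]
    [∀ i, CompleteSpace (X i)]
    {Y : Type*} [NormedAddCommGroup Y] [NormedSpace 𝕜 Y] [CompleteSpace Y]
    (p : ℝ) (hp : 0 < p)
    (T : ContinuousMultilinearMap 𝕜 X Y) :
    (∃ C₁ > 0, ∀ (m : ℕ) (x : Fin m → Π i, X i),
        ∑ j, ‖T (x j)‖ ^ p ≤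
          C₁ * ⨆ B : multilinearFormBall 𝕜 X,
            ∑ j, ‖(B : (Π i, X i) → 𝕜) (x j)‖ ^ p) ↔
    (∃ C > 0, ∃ μ : Measure (multilinearFormBall 𝕜 X),
        μ.Regular ∧ IsProbabilityMeasure μ ∧
        ∀ x : Π i, X i, ‖T x‖ ≤
          C * (∫ B, ‖(B : (Π i, X i) → 𝕜) x‖ ^ p ∂μ) ^ (1 / p)) := by
  exact ⟨fun h => mfb_forward hn hp h, fun h => mfb_backward hp h⟩
end
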